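/- arXiv:2402.00168 — 3 statements merged into one kernel-verified Lean document; each statement's English description precedes it below -/
import Mathlib

section
/- Let μ̄(a,x) be any bounded measurable function (not necessarily equal to the true μ). Then the pseudo-outcome built from the true conditional treatment density π and the true labeling propensity ρ satisfies, for P_A-almost every a, E[φ(Z; μ̄, π, ρ) | A = a] = θ(a). -/
open MeasureTheory ProbabilityTheory
open scoped ENNReal


open MeasureTheory in
/-- Auxiliary: iterated Bochner integral of a nonnegative function with uniformly bounded
inner `lintegral` equals the `lintegral` over the product. -/
lemma aux_ofReal_iterated {α β : Type*} [MeasurableSpace α] [MeasurableSpace β]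
    (μm : Measure α) [IsFiniteMeasure μm] (νm : Measure β) [SFinite νm]
    (g : α → β → ℝ) (hg : Measurable (Function.uncurry g)) (h0 : ∀ a b, 0 ≤ g a b)
    (Cb : ℝ≥0∞) (hCb : Cb ≠ ⊤) (hb : ∀ a, ∫⁻ b, ENNReal.ofReal (g a b) ∂νm ≤ Cb) :
    ENNReal.ofReal (∫ a, ∫ b, g a b ∂νm ∂μm)
      = ∫⁻ p : α × β, ENNReal.ofReal (g p.1 p.2) ∂(μm.prod νm) := by
  have hg_of : Measurable fun p : α × β => ENNReal.ofReal (g p.1 p.2) :=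
    (measurable_coe_nnreal_ennreal.comp (measurable_real_toNNReal.comp hg))
  set L : α → ℝ≥0∞ := fun a => ∫⁻ b, ENNReal.ofReal (g a b) ∂νm with hL
  have hL_meas : Measurable L := Measurable.lintegral_prod_right hg_of
  have hL_fin : ∀ a, L a ≠ ⊤ := fun a => ne_top_of_le_ne_top hCb (hb a)
  have hinner : ∀ a, ∫ b, g a b ∂νm = (L a).toReal := by
    intro a
    rw [integral_eq_lintegral_of_nonneg_ae (Filter.Eventually.of_forall fun b => h0 a b)
      (hg.of_uncurry_left).aestronglyMeasurable]
  have houter : ∀ a, ENNReal.ofReal (∫ b, g a b ∂νm) = L a := by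
    intro a; rw [hinner a, ENNReal.ofReal_toReal (hL_fin a)]
  have hF_meas : Measurable fun a => (L a).toReal := hL_meas.ennreal_toReal
  have hF_int : Integrable (fun a => (L a).toReal) μm := by
    refine ⟨hF_meas.aestronglyMeasurable, ?_⟩
    rw [hasFiniteIntegral_iff_ofReal (Filter.Eventually.of_forall fun a => ENNReal.toReal_nonneg)]
    calc ∫⁻ a, ENNReal.ofReal (L a).toReal ∂μm ≤ ∫⁻ a, Cb ∂μm := by
          refine lintegral_mono fun a => ?_
          rw [ENNReal.ofReal_toReal (hL_fin a)]; exact hb a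
    _ = Cb * μm Set.univ := by rw [lintegral_const]
    _ < ⊤ := ENNReal.mul_lt_top hCb.lt_top (measure_lt_top _ _)
  calc ENNReal.ofReal (∫ a, ∫ b, g a b ∂νm ∂μm)
      = ENNReal.ofReal (∫ a, (L a).toReal ∂μm) := by simp_rw [hinner]
    _ = ∫⁻ a, ENNReal.ofReal (L a).toReal ∂μm := by
        rw [← ofReal_integral_eq_lintegral_ofReal hF_int
          (Filter.Eventually.of_forall fun a => ENNReal.toReal_nonneg)]
    _ = ∫⁻ a, L a ∂μm := by
        refine lintegral_congr fun a => ?_; rw [ENNReal.ofReal_toReal (hL_fin a)]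
    _ = ∫⁻ p : α × β, ENNReal.ofReal (g p.1 p.2) ∂(μm.prod νm) := (lintegral_prod _ hg_of.aemeasurable).symm


/-- Auxiliary: a bounded measurable real function is integrable w.r.t. a finite measure. -/
lemma aux_int_bdd {α : Type*} [MeasurableSpace α] (m : MeasureTheory.Measure α)
    [MeasureTheory.IsFiniteMeasure m] (F : α → ℝ) (hF : Measurable F) (C : ℝ)
    (hC : ∀ x, |F x| ≤ C) : MeasureTheory.Integrable F m :=
  MeasureTheory.Integrable.mono' (MeasureTheory.integrable_const C) hF.aestronglyMeasurable
    (Filter.Eventually.of_forall fun x => by rw [Real.norm_eq_abs]; exact hC x)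

set_option maxHeartbeats 2000000 in
/-- **double robustness, treatment and labeling models correct.** Let `μ̄` be any
bounded measurable function of `(a,x)` (not necessarily the true outcome regression `μ`), let
`τ̄` be a version of `E[μ̄(A,X) | A, V]` and `θ̄(a) = ∫ τ̄(a,v) dP_V(v)`. The pseudo-outcome
built from the true conditional treatment density `π` (with marginal `f`) and the true labeling
propensity `ρ`,
`φ(Z; μ̄, π, ρ) = [R(Y − μ̄(A,X))/ρ(A,X) + μ̄(A,X) − τ̄(A,V)]·(f(A)/π(A|V)) + θ̄(A)`,
satisfies `E[φ(Z; μ̄, π, ρ) | A = a] = θ(a)` for `P_A`-almost every `a`. -/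
theorem stmt_2 {𝒱 𝒮 Ω : Type*} [MeasurableSpace 𝒱] [MeasurableSpace 𝒮] [MeasurableSpace Ω]
    (P : Measure Ω) [IsProbabilityMeasure P]
    (V : Ω → 𝒱) (S : Ω → 𝒮) (A Y R : Ω → ℝ)
    (hV : Measurable V) (hS : Measurable S) (hA : Measurable A)
    (hY : Measurable Y) (hR : Measurable R)
    (hY_bdd : ∃ C, ∀ ω, |Y ω| ≤ C)
    (hR01 : ∀ ω, R ω = 0 ∨ R ω = 1)
    -- conditional density π(a|v) of A given V, w.r.t. Lebesgue measure
    (π : ℝ → 𝒱 → ℝ) (hπ_meas : Measurable (Function.uncurry π))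
    (hπ_nonneg : ∀ a v, 0 ≤ π a v)
    (hdens : ∀ g : ℝ → 𝒱 → ℝ, Measurable (Function.uncurry g) →
      (∃ C, ∀ a v, |g a v| ≤ C) →
      ∫ ω, g (A ω) (V ω) ∂P = ∫ v, ∫ a, g a v * π a v ∂volume ∂(P.map V))
    (f : ℝ → ℝ) (hf : ∀ a, f a = ∫ v, π a v ∂(P.map V))
    -- positivity
    (hπ_pos : ∀ᵐ p ∂(volume.prod (P.map V)), 0 < π p.1 p.2)
    (c : ℝ) (hc : 0 < c)
    -- true labeling propensity ρ, a version of P(R=1 | A, X), bounded below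
    (ρ : ℝ → 𝒱 × 𝒮 → ℝ) (hρ_meas : Measurable (Function.uncurry ρ))
    (hρ : ∀ h : ℝ → 𝒱 × 𝒮 → ℝ, Measurable (Function.uncurry h) →
      (∃ C, ∀ a x, |h a x| ≤ C) →
      ∫ ω, R ω * h (A ω) (V ω, S ω) ∂P = ∫ ω, ρ (A ω) (V ω, S ω) * h (A ω) (V ω, S ω) ∂P)
    (hρc : ∀ᵐ ω ∂P, c ≤ ρ (A ω) (V ω, S ω))
    -- true outcome regression μ, a version of E[Y | A, X, R=1]
    (μ : ℝ → 𝒱 × 𝒮 → ℝ) (hμ_meas : Measurable (Function.uncurry μ))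
    (hμ_bdd : ∃ C, ∀ a x, |μ a x| ≤ C)
    (hμ : ∀ h : ℝ → 𝒱 × 𝒮 → ℝ, Measurable (Function.uncurry h) →
      (∃ C, ∀ a x, |h a x| ≤ C) →
      ∫ ω, R ω * Y ω * h (A ω) (V ω, S ω) ∂P
        = ∫ ω, R ω * μ (A ω) (V ω, S ω) * h (A ω) (V ω, S ω) ∂P)
    -- τ, a version of E[μ(A,X) | A, V]
    (τ : ℝ → 𝒱 → ℝ) (hτ_meas : Measurable (Function.uncurry τ))
    (hτ_bdd : ∃ C, ∀ a v, |τ a v| ≤ C)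
    (hτ : ∀ h : ℝ → 𝒱 → ℝ, Measurable (Function.uncurry h) →
      (∃ C, ∀ a v, |h a v| ≤ C) →
      ∫ ω, μ (A ω) (V ω, S ω) * h (A ω) (V ω) ∂P = ∫ ω, τ (A ω) (V ω) * h (A ω) (V ω) ∂P)
    -- dose-response function
    (θ : ℝ → ℝ) (hθ : ∀ a, θ a = ∫ v, τ a v ∂(P.map V))
    -- regular conditional distribution of Z given A = a
    (ν : Kernel ℝ Ω) [IsMarkovKernel ν]
    (hν : ∀ (u : ℝ → ℝ) (F : Ω → ℝ), Measurable u → (∃ C, ∀ a, |u a| ≤ C) →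
      Measurable F → (∃ C, ∀ ω, |F ω| ≤ C) →
      ∫ ω, u (A ω) * F ω ∂P = ∫ a, u a * ∫ ω, F ω ∂(ν a) ∂(P.map A))
    -- an arbitrary bounded measurable working outcome model μ̄
    (μbar : ℝ → 𝒱 × 𝒮 → ℝ) (hμbar_meas : Measurable (Function.uncurry μbar))
    (hμbar_bdd : ∃ C, ∀ a x, |μbar a x| ≤ C)
    -- τ̄, a version of E[μ̄(A,X) | A, V]
    (τbar : ℝ → 𝒱 → ℝ) (hτbar_meas : Measurable (Function.uncurry τbar))
    (hτbar_bdd : ∃ C, ∀ a v, |τbar a v| ≤ C)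
    (hτbar : ∀ h : ℝ → 𝒱 → ℝ, Measurable (Function.uncurry h) →
      (∃ C, ∀ a v, |h a v| ≤ C) →
      ∫ ω, μbar (A ω) (V ω, S ω) * h (A ω) (V ω) ∂P
        = ∫ ω, τbar (A ω) (V ω) * h (A ω) (V ω) ∂P)
    (θbar : ℝ → ℝ) (hθbar : ∀ a, θbar a = ∫ v, τbar a v ∂(P.map V)) :
    ∀ᵐ a ∂(P.map A),
      ∫ ω, ((R ω * (Y ω - μbar (A ω) (V ω, S ω)) / ρ (A ω) (V ω, S ω)
            + μbar (A ω) (V ω, S ω) - τbar (A ω) (V ω)) * (f (A ω) / π (A ω) (V ω))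
          + θbar (A ω)) ∂(ν a)
        = θ a := by
  classical
  obtain ⟨Cy, hCy⟩ := hY_bdd
  obtain ⟨Cm, hCm⟩ := hμbar_bdd
  obtain ⟨Ct, hCt⟩ := hτbar_bdd
  obtain ⟨Cmu, hCmu⟩ := hμ_bdd
  obtain ⟨Cτ, hCτ⟩ := hτ_bdd
  set Q : Measure 𝒱 := P.map V with hQdef
  set PA : Measure ℝ := P.map A with hPAdef
  haveI hQP : IsProbabilityMeasure Q := Measure.isProbabilityMeasure_map hV.aemeasurable
  haveI hPAP : IsProbabilityMeasure PA := Measure.isProbabilityMeasure_map hA.aemeasurable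
  -- basic measurability
  have hX_meas : Measurable (fun ω => (A ω, (V ω, S ω))) := hA.prodMk (hV.prodMk hS)
  have hAV_meas : Measurable (fun ω => (A ω, V ω)) := hA.prodMk hV
  have hμbarA : Measurable (fun ω => μbar (A ω) (V ω, S ω)) := hμbar_meas.comp hX_meas
  have hμA : Measurable (fun ω => μ (A ω) (V ω, S ω)) := hμ_meas.comp hX_meas
  have hρA : Measurable (fun ω => ρ (A ω) (V ω, S ω)) := hρ_meas.comp hX_meas
  have hτbarA : Measurable (fun ω => τbar (A ω) (V ω)) := hτbar_meas.comp hAV_meas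
  have hτA : Measurable (fun ω => τ (A ω) (V ω)) := hτ_meas.comp hAV_meas
  have hπA : Measurable (fun ω => π (A ω) (V ω)) := hπ_meas.comp hAV_meas
  have hf_meas : Measurable f := by
    have h1 : StronglyMeasurable (fun a => ∫ v, Function.uncurry π (a, v) ∂Q) :=
      hπ_meas.stronglyMeasurable.integral_prod_right
    have : f = fun a => ∫ v, Function.uncurry π (a, v) ∂Q := funext fun a => hf a
    rw [this]; exact h1.measurable
  have hθ_meas : Measurable θ := by
    have h1 : StronglyMeasurable (fun a => ∫ v, Function.uncurry τ (a, v) ∂Q) :=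
      hτ_meas.stronglyMeasurable.integral_prod_right
    have : θ = fun a => ∫ v, Function.uncurry τ (a, v) ∂Q := funext fun a => hθ a
    rw [this]; exact h1.measurable
  have hθbar_meas : Measurable θbar := by
    have h1 : StronglyMeasurable (fun a => ∫ v, Function.uncurry τbar (a, v) ∂Q) :=
      hτbar_meas.stronglyMeasurable.integral_prod_right
    have : θbar = fun a => ∫ v, Function.uncurry τbar (a, v) ∂Q := funext fun a => hθbar a
    rw [this]; exact h1.measurable
  -- bounds
  have hf0 : ∀ a, 0 ≤ f a := by
    intro a; rw [hf a]; exact integral_nonneg fun v => hπ_nonneg a v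
  have hθ_bdd : ∀ a, |θ a| ≤ Cτ := by
    intro a; rw [hθ a, ← Real.norm_eq_abs]
    have := norm_integral_le_of_norm_le_const (μ := Q) (f := fun v => τ a v) (C := Cτ)
      (Filter.Eventually.of_forall fun v => by rw [Real.norm_eq_abs]; exact hCτ a v)
    simpa using this
  have hθbar_bdd : ∀ a, |θbar a| ≤ Ct := by
    intro a; rw [hθbar a, ← Real.norm_eq_abs]
    have := norm_integral_le_of_norm_le_const (μ := Q) (f := fun v => τbar a v) (C := Ct)
      (Filter.Eventually.of_forall fun v => by rw [Real.norm_eq_abs]; exact hCt a v)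
    simpa using this
  have hRabs : ∀ ω, |R ω| ≤ 1 := by
    intro ω; rcases hR01 ω with h | h <;> rw [h] <;> norm_num
  -- the modified propensity, bounded below by c everywhere
  set ρt : ℝ → 𝒱 × 𝒮 → ℝ := fun a x => max (ρ a x) c with hρtdef
  have hρt_meas : Measurable (Function.uncurry ρt) := hρ_meas.max measurable_const
  have hρtA : Measurable (fun ω => ρt (A ω) (V ω, S ω)) := hρt_meas.comp hX_meas
  have hρt_ge : ∀ a x, c ≤ ρt a x := fun a x => le_max_right _ _
  have hρt_pos : ∀ a x, 0 < ρt a x := fun a x => lt_of_lt_of_le hc (hρt_ge a x)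
  -- the weight and pseudo-outcome pieces
  set W : Ω → ℝ := fun ω => f (A ω) / π (A ω) (V ω) with hWdef
  have hW_meas : Measurable W := (hf_meas.comp hA).div hπA
  have hW0 : ∀ ω, 0 ≤ W ω := fun ω => div_nonneg (hf0 _) (hπ_nonneg _ _)
  set T : Ω → ℝ := fun ω => R ω * (Y ω - μbar (A ω) (V ω, S ω)) / ρt (A ω) (V ω, S ω)
      + μbar (A ω) (V ω, S ω) - τbar (A ω) (V ω) with hTdef
  have hT_meas : Measurable T :=
    (((hR.mul (hY.sub hμbarA)).div hρtA).add hμbarA).sub hτbarA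
  set M : ℝ := max ((Cy + Cm) / c + Cm + Ct) 0 with hMdef
  have hM0 : 0 ≤ M := le_max_right _ _
  have hT_bdd : ∀ ω, |T ω| ≤ M := by
    intro ω
    have h1 : |R ω * (Y ω - μbar (A ω) (V ω, S ω)) / ρt (A ω) (V ω, S ω)| ≤ (Cy + Cm) / c := by
      rw [abs_div, abs_of_pos (hρt_pos _ _)]
      have hnum : |R ω * (Y ω - μbar (A ω) (V ω, S ω))| ≤ Cy + Cm := ?_
      · exact div_le_div₀ (le_trans (abs_nonneg _) hnum) hnum hc (hρt_ge _ _)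
      calc |R ω * (Y ω - μbar (A ω) (V ω, S ω))|
          = |R ω| * |Y ω - μbar (A ω) (V ω, S ω)| := abs_mul _ _
        _ ≤ 1 * (Cy + Cm) := by
            refine mul_le_mul (hRabs ω) ?_ (abs_nonneg _) zero_le_one
            calc |Y ω - μbar (A ω) (V ω, S ω)| ≤ |Y ω| + |μbar (A ω) (V ω, S ω)| := abs_sub _ _
              _ ≤ Cy + Cm := add_le_add (hCy ω) (hCm _ _)
        _ = Cy + Cm := one_mul _
    have h2 : |T ω| ≤ (Cy + Cm) / c + Cm + Ct := by
      rw [hTdef]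
      calc |R ω * (Y ω - μbar (A ω) (V ω, S ω)) / ρt (A ω) (V ω, S ω)
            + μbar (A ω) (V ω, S ω) - τbar (A ω) (V ω)|
          ≤ |R ω * (Y ω - μbar (A ω) (V ω, S ω)) / ρt (A ω) (V ω, S ω)
            + μbar (A ω) (V ω, S ω)| + |τbar (A ω) (V ω)| := abs_sub _ _
        _ ≤ (|R ω * (Y ω - μbar (A ω) (V ω, S ω)) / ρt (A ω) (V ω, S ω)|
            + |μbar (A ω) (V ω, S ω)|) + |τbar (A ω) (V ω)| :=
            add_le_add (abs_add_le _ _) le_rfl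
        _ ≤ ((Cy + Cm) / c + Cm) + Ct :=
            add_le_add (add_le_add h1 (hCm _ _)) (hCt _ _)
    exact le_trans h2 (le_max_left _ _)
  -- truncated weights
  set Wn : ℕ → ℝ → 𝒱 → ℝ := fun n a v => min (f a / π a v) n with hWndef
  have hWn_meas : ∀ n, Measurable (Function.uncurry (Wn n)) := by
    intro n
    exact ((hf_meas.comp measurable_fst).div hπ_meas).min measurable_const
  have hWn_comp : ∀ n ω, Wn n (A ω) (V ω) = min (W ω) n := fun n ω => rfl
  have hWn0 : ∀ n a v, 0 ≤ Wn n a v := fun n a v => le_min (div_nonneg (hf0 _) (hπ_nonneg _ _)) (Nat.cast_nonneg n)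
  have hWn_le : ∀ n a v, Wn n a v ≤ n := fun n a v => min_le_right _ _
  have hWnπ : ∀ n a v, Wn n a v * π a v = min (f a) (n * π a v) := by
    intro n a v
    rcases (hπ_nonneg a v).eq_or_lt with h | h
    · rw [← h, mul_zero, mul_zero, min_eq_right (hf0 a)]
    · rw [hWndef]
      rw [min_mul_of_nonneg _ _ (le_of_lt h), div_mul_cancel₀ _ (ne_of_gt h)]
  -- integrability of π on the product space
  have hπ_of_meas : Measurable fun p : 𝒱 × ℝ => ENNReal.ofReal (π p.2 p.1) :=
    ENNReal.measurable_ofReal.comp (hπ_meas.comp (measurable_snd.prodMk measurable_fst))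
  have hπ_prod : ∫⁻ p : 𝒱 × ℝ, ENNReal.ofReal (π p.2 p.1) ∂(Q.prod volume) ≤ 1 := by
    set χ : ℕ → ℝ → 𝒱 → ℝ := fun n a v => if π a v ≤ n ∧ |a| ≤ n then 1 else 0 with hχdef
    have hχ_meas : ∀ n, Measurable (Function.uncurry (χ n)) := by
      intro n
      refine Measurable.ite ?_ measurable_const measurable_const
      exact MeasurableSet.inter (measurableSet_le hπ_meas measurable_const)
        (measurableSet_le (measurable_fst.abs) measurable_const)
    have hχ01 : ∀ n a v, χ n a v = 0 ∨ χ n a v = 1 := by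
      intro n a v; by_cases h : π a v ≤ n ∧ |a| ≤ n <;> simp [hχdef, h]
    have hχ0 : ∀ n a v, 0 ≤ χ n a v := by
      intro n a v; rcases hχ01 n a v with h | h <;> rw [h] <;> norm_num
    have hχ1 : ∀ n a v, χ n a v ≤ 1 := by
      intro n a v; rcases hχ01 n a v with h | h <;> rw [h] <;> norm_num
    -- pointwise monotone convergence to π
    have hmono : Monotone fun n : ℕ => fun p : 𝒱 × ℝ => ENNReal.ofReal (χ n p.2 p.1 * π p.2 p.1) := by
      intro n m hnm
      intro p
      refine ENNReal.ofReal_le_ofReal ?_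
      by_cases h : π p.2 p.1 ≤ n ∧ |p.2| ≤ n
      · have h' : π p.2 p.1 ≤ m ∧ |p.2| ≤ m :=
          ⟨le_trans h.1 (Nat.cast_le.2 hnm), le_trans h.2 (Nat.cast_le.2 hnm)⟩
        simp [hχdef, h, h']
      · simp only [hχdef, h, if_false]
        rw [zero_mul]
        split_ifs with h'
        exacts [by rw [one_mul]; exact hπ_nonneg _ _, by rw [zero_mul]]
    have hsup : ∀ p : 𝒱 × ℝ,
        (⨆ n : ℕ, ENNReal.ofReal (χ n p.2 p.1 * π p.2 p.1)) = ENNReal.ofReal (π p.2 p.1) := by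
      intro p
      refine le_antisymm (iSup_le fun n => ENNReal.ofReal_le_ofReal ?_) ?_
      · calc χ n p.2 p.1 * π p.2 p.1 ≤ 1 * π p.2 p.1 :=
            mul_le_mul_of_nonneg_right (hχ1 _ _ _) (hπ_nonneg _ _)
          _ = π p.2 p.1 := one_mul _
      · obtain ⟨n, hn⟩ := exists_nat_ge (max (π p.2 p.1) |p.2|)
        refine le_iSup_of_le n (le_of_eq ?_)
        have h : π p.2 p.1 ≤ n ∧ |p.2| ≤ n :=
          ⟨le_trans (le_max_left _ _) hn, le_trans (le_max_right _ _) hn⟩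
        simp [hχdef, h]
    -- for each n, the truncated product lintegral is at most 1
    have hkey : ∀ n : ℕ,
        ∫⁻ p : 𝒱 × ℝ, ENNReal.ofReal (χ n p.2 p.1 * π p.2 p.1) ∂(Q.prod volume) ≤ 1 := by
      intro n
      have hg_meas : Measurable (Function.uncurry fun (v : 𝒱) (a : ℝ) => χ n a v * π a v) := by
        exact ((hχ_meas n).comp (measurable_snd.prodMk measurable_fst)).mul
          (hπ_meas.comp (measurable_snd.prodMk measurable_fst))
      have hg0 : ∀ v a, 0 ≤ χ n a v * π a v := fun v a => mul_nonneg (hχ0 _ _ _) (hπ_nonneg _ _)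
      have hb : ∀ v : 𝒱, ∫⁻ a, ENNReal.ofReal (χ n a v * π a v) ∂volume
          ≤ ENNReal.ofReal n * volume (Set.Icc (-(n:ℝ)) n) := by
        intro v
        calc ∫⁻ a, ENNReal.ofReal (χ n a v * π a v) ∂volume
            ≤ ∫⁻ a, (Set.Icc (-(n:ℝ)) n).indicator (fun _ => ENNReal.ofReal n) a ∂volume := by
              refine lintegral_mono fun a => ?_
              by_cases h : π a v ≤ n ∧ |a| ≤ n
              · have ha : a ∈ Set.Icc (-(n:ℝ)) n := abs_le.1 h.2
                rw [Set.indicator_of_mem ha]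
                refine ENNReal.ofReal_le_ofReal ?_
                simp [hχdef, h]
              · simp [hχdef, h]
          _ = ENNReal.ofReal n * volume (Set.Icc (-(n:ℝ)) n) := by
              rw [lintegral_indicator measurableSet_Icc, setLIntegral_const]
      have hCb : ENNReal.ofReal n * volume (Set.Icc (-(n:ℝ)) n) ≠ ⊤ := by
        refine ENNReal.mul_ne_top ENNReal.ofReal_ne_top ?_
        rw [Real.volume_Icc]; exact ENNReal.ofReal_ne_top
      have := aux_ofReal_iterated Q volume (fun v a => χ n a v * π a v) hg_meas hg0
        _ hCb hb
      rw [← this]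
      have hEχ : ∫ v, ∫ a, χ n a v * π a v ∂volume ∂Q ≤ 1 := by
        rw [← hdens (χ n) (hχ_meas n) ⟨1, fun a v => abs_le.2 ⟨by linarith [hχ0 n a v], hχ1 n a v⟩⟩]
        calc ∫ ω, χ n (A ω) (V ω) ∂P ≤ ∫ ω, (1:ℝ) ∂P := by
              refine integral_mono ?_ (integrable_const _) (fun ω => hχ1 _ _ _)
              refine Integrable.mono' (integrable_const (1:ℝ))
                (((hχ_meas n).comp hAV_meas).aestronglyMeasurable) ?_
              exact Filter.Eventually.of_forall fun ω => by
                rw [Real.norm_eq_abs, abs_of_nonneg (hχ0 _ _ _)]; exact hχ1 _ _ _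
          _ = 1 := by simp
      calc ENNReal.ofReal (∫ v, ∫ a, χ n a v * π a v ∂volume ∂Q) ≤ ENNReal.ofReal 1 :=
            ENNReal.ofReal_le_ofReal hEχ
        _ = 1 := ENNReal.ofReal_one
    have hχof_meas : ∀ n : ℕ, Measurable fun p : 𝒱 × ℝ =>
        ENNReal.ofReal (χ n p.2 p.1 * π p.2 p.1) := by
      intro n
      exact ENNReal.measurable_ofReal.comp
        ((((hχ_meas n).comp (measurable_snd.prodMk measurable_fst)).mul
          (hπ_meas.comp (measurable_snd.prodMk measurable_fst))))
    calc ∫⁻ p : 𝒱 × ℝ, ENNReal.ofReal (π p.2 p.1) ∂(Q.prod volume)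
        = ∫⁻ p : 𝒱 × ℝ, ⨆ n : ℕ, ENNReal.ofReal (χ n p.2 p.1 * π p.2 p.1) ∂(Q.prod volume) := by
          refine lintegral_congr fun p => (hsup p).symm
      _ = ⨆ n : ℕ, ∫⁻ p : 𝒱 × ℝ, ENNReal.ofReal (χ n p.2 p.1 * π p.2 p.1) ∂(Q.prod volume) :=
          lintegral_iSup hχof_meas hmono
      _ ≤ 1 := iSup_le hkey
  -- f is integrable with total mass at most 1
  have hfL : ∀ a, ENNReal.ofReal (f a) ≤ ∫⁻ v, ENNReal.ofReal (π a v) ∂Q := by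
    intro a
    have : f a = (∫⁻ v, ENNReal.ofReal (π a v) ∂Q).toReal := by
      rw [hf a, integral_eq_lintegral_of_nonneg_ae
        (Filter.Eventually.of_forall fun v => hπ_nonneg a v)
        (hπ_meas.of_uncurry_left).aestronglyMeasurable]
    rw [this]
    exact ENNReal.ofReal_toReal_le
  have hf_lint : ∫⁻ a, ENNReal.ofReal (f a) ∂volume ≤ 1 := by
    calc ∫⁻ a, ENNReal.ofReal (f a) ∂volume
        ≤ ∫⁻ a, ∫⁻ v, ENNReal.ofReal (π a v) ∂Q ∂volume := lintegral_mono hfL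
      _ = ∫⁻ v, ∫⁻ a, ENNReal.ofReal (π a v) ∂volume ∂Q := by
          refine lintegral_lintegral_swap ?_
          exact (ENNReal.measurable_ofReal.comp (hπ_meas.comp
            (measurable_fst.prodMk measurable_snd))).aemeasurable
      _ = ∫⁻ p : 𝒱 × ℝ, ENNReal.ofReal (π p.2 p.1) ∂(Q.prod volume) :=
          (lintegral_prod _ hπ_of_meas.aemeasurable).symm
      _ ≤ 1 := hπ_prod
  have hf_int : Integrable f volume := by
    refine ⟨hf_meas.aestronglyMeasurable, ?_⟩
    rw [hasFiniteIntegral_iff_ofReal (Filter.Eventually.of_forall hf0)]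
    exact lt_of_le_of_lt hf_lint ENNReal.one_lt_top
  have hf_int_one : ∫ a, f a ∂volume ≤ 1 := by
    rw [integral_eq_lintegral_of_nonneg_ae (Filter.Eventually.of_forall hf0)
      hf_meas.aestronglyMeasurable]
    calc (∫⁻ a, ENNReal.ofReal (f a) ∂volume).toReal ≤ (1 : ℝ≥0∞).toReal :=
          ENNReal.toReal_mono ENNReal.one_ne_top hf_lint
      _ = 1 := ENNReal.toReal_one
  have hπ_prod_int : Integrable (fun p : 𝒱 × ℝ => π p.2 p.1) (Q.prod volume) := by
    refine ⟨(hπ_meas.comp (measurable_snd.prodMk measurable_fst)).aestronglyMeasurable, ?_⟩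
    rw [hasFiniteIntegral_iff_ofReal (Filter.Eventually.of_forall fun p => hπ_nonneg _ _)]
    exact lt_of_le_of_lt hπ_prod ENNReal.one_lt_top
  -- P.map A has density f
  have hdens_map : ∀ g : ℝ → ℝ, Measurable g → ∀ C : ℝ, (∀ a, |g a| ≤ C) →
      ∫ a, g a ∂PA = ∫ a, g a * f a ∂volume := by
    intro g hg C hgC
    have hprod_int : Integrable (fun p : 𝒱 × ℝ => g p.2 * π p.2 p.1) (Q.prod volume) := by
      refine Integrable.mono' (hπ_prod_int.const_mul C)
        ((hg.comp measurable_snd).mul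
          (hπ_meas.comp (measurable_snd.prodMk measurable_fst))).aestronglyMeasurable ?_
      refine Filter.Eventually.of_forall fun p => ?_
      rw [Real.norm_eq_abs, abs_mul, abs_of_nonneg (hπ_nonneg _ _)]
      exact mul_le_mul_of_nonneg_right (hgC _) (hπ_nonneg _ _)
    calc ∫ a, g a ∂PA = ∫ ω, g (A ω) ∂P := by
          rw [hPAdef, integral_map hA.aemeasurable hg.aestronglyMeasurable]
      _ = ∫ v, ∫ a, g a * π a v ∂volume ∂Q := hdens (fun a _ => g a)
          (hg.comp measurable_fst) ⟨C, fun a _ => hgC a⟩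
      _ = ∫ a, ∫ v, g a * π a v ∂Q ∂volume := by
          exact integral_integral_swap (f := fun (v : 𝒱) (a : ℝ) => g a * π a v) hprod_int
      _ = ∫ a, g a * f a ∂volume := by
          refine integral_congr_ae (Filter.Eventually.of_forall fun a => ?_)
          show ∫ v, g a * π a v ∂Q = g a * f a
          rw [hf a, integral_const_mul]
  -- kernel integral measurability
  have hker : ∀ F : Ω → ℝ, Measurable F → Measurable fun a => ∫ ω, F ω ∂ν a := by
    intro F hF
    have h1 : StronglyMeasurable (Function.uncurry fun (_ : ℝ) (ω : Ω) => F ω) :=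
      (hF.comp measurable_snd).stronglyMeasurable
    exact h1.integral_kernel_prod_right.measurable
  -- transfer of null sets to the disintegration
  have hnull : ∀ N : Set Ω, MeasurableSet N → P N = 0 → ∀ᵐ a ∂PA, ν a N = 0 := by
    intro N hN hPN
    have hInd_meas : Measurable (N.indicator (fun _ => (1:ℝ))) := measurable_const.indicator hN
    have hInd_bdd : ∀ ω, |N.indicator (fun _ => (1:ℝ)) ω| ≤ 1 := by
      intro ω; by_cases h : ω ∈ N <;> simp [Set.indicator_apply, h]
    have h1 := hν (fun _ => 1) (N.indicator (fun _ => (1:ℝ))) measurable_const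
      ⟨1, fun a => by norm_num⟩ hInd_meas ⟨1, hInd_bdd⟩
    simp_rw [one_mul] at h1
    have hLHS : ∫ ω, N.indicator (fun _ => (1:ℝ)) ω ∂P = 0 := by
      rw [integral_indicator_const (1:ℝ) hN, measureReal_def, hPN]; simp
    have hg_eq : ∀ a, ∫ ω, N.indicator (fun _ => (1:ℝ)) ω ∂ν a = (ν a N).toReal := by
      intro a; rw [integral_indicator_const (1:ℝ) hN]; simp [measureReal_def]
    have hg_meas : Measurable fun a => ∫ ω, N.indicator (fun _ => (1:ℝ)) ω ∂ν a :=
      hker _ hInd_meas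
    have hg_int : Integrable (fun a => ∫ ω, N.indicator (fun _ => (1:ℝ)) ω ∂ν a) PA := by
      refine Integrable.mono' (integrable_const (1:ℝ)) hg_meas.aestronglyMeasurable ?_
      refine Filter.Eventually.of_forall fun a => ?_
      rw [hg_eq a, Real.norm_eq_abs, abs_of_nonneg ENNReal.toReal_nonneg]
      exact ENNReal.toReal_le_of_le_ofReal zero_le_one (by simpa using prob_le_one)
    have h0 : ∫ a, ∫ ω, N.indicator (fun _ => (1:ℝ)) ω ∂ν a ∂PA = 0 := by
      rw [← h1, hLHS]
    have hae := (integral_eq_zero_iff_of_nonneg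
      (fun a => by rw [hg_eq a]; exact ENNReal.toReal_nonneg) hg_int).1 h0
    filter_upwards [hae] with a ha
    have : (ν a N).toReal = 0 := by rw [← hg_eq a]; exact ha
    exact (ENNReal.toReal_eq_zero_iff _).1 this |>.resolve_right (measure_ne_top _ _)
  -- ρ ≥ c also under the disintegration
  have hρae : ∀ᵐ a ∂PA, ∀ᵐ ω ∂ν a, c ≤ ρ (A ω) (V ω, S ω) := by
    have hN : MeasurableSet {ω | ¬ c ≤ ρ (A ω) (V ω, S ω)} :=
      (measurableSet_le measurable_const hρA).compl
    have hPN : P {ω | ¬ c ≤ ρ (A ω) (V ω, S ω)} = 0 := by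
      exact MeasureTheory.ae_iff.1 hρc
    filter_upwards [hnull _ hN hPN] with a ha
    rw [MeasureTheory.ae_iff]
    exact ha
  -- A ω = a, ν a - almost everywhere
  have hAeq : ∀ᵐ a ∂PA, ∀ᵐ ω ∂ν a, A ω = a := by
    have hq_meas : Measurable Real.arctan := Real.measurable_arctan
    have hq_bdd : ∀ x : ℝ, |Real.arctan x| ≤ 2 := by
      intro x
      refine le_trans (le_of_lt (abs_lt.2 ⟨Real.neg_pi_div_two_lt_arctan x,
        Real.arctan_lt_pi_div_two x⟩)) ?_
      linarith [Real.pi_le_four]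
    have hsq_bdd : ∀ a : ℝ, ∀ ω, |(Real.arctan (A ω) - Real.arctan a)^2| ≤ 16 := by
      intro a ω
      rw [abs_pow]
      calc |Real.arctan (A ω) - Real.arctan a| ^ 2 ≤ 4 ^ 2 := by
            refine pow_le_pow_left₀ (abs_nonneg _) ?_ 2
            calc |Real.arctan (A ω) - Real.arctan a| ≤ |Real.arctan (A ω)| + |Real.arctan a| :=
                abs_sub _ _
              _ ≤ 2 + 2 := add_le_add (hq_bdd _) (hq_bdd _)
              _ = 4 := by norm_num
        _ = 16 := by norm_num
    set Dq : ℝ → ℝ := fun a => ∫ ω, (Real.arctan (A ω) - Real.arctan a)^2 ∂ν a with hDqdef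
    have hDq_meas : Measurable Dq := by
      have h1 : StronglyMeasurable (Function.uncurry
          fun (a : ℝ) (ω : Ω) => (Real.arctan (A ω) - Real.arctan a)^2) := by
        refine Measurable.stronglyMeasurable ?_
        exact (((hq_meas.comp hA).comp measurable_snd).sub
          (hq_meas.comp measurable_fst)).pow measurable_const
      exact h1.integral_kernel_prod_right.measurable
    have hDq_nonneg : ∀ a, 0 ≤ Dq a := fun a => integral_nonneg fun ω => sq_nonneg _
    have hDq_int : Integrable Dq PA := by
      refine Integrable.mono' (integrable_const (16:ℝ)) hDq_meas.aestronglyMeasurable ?_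
      refine Filter.Eventually.of_forall fun a => ?_
      rw [Real.norm_eq_abs, abs_of_nonneg (hDq_nonneg a), hDqdef]
      have := norm_integral_le_of_norm_le_const (μ := ν a)
        (f := fun ω => (Real.arctan (A ω) - Real.arctan a)^2) (C := 16)
        (Filter.Eventually.of_forall fun ω => by rw [Real.norm_eq_abs]; exact hsq_bdd a ω)
      refine le_trans (le_abs_self _) ?_
      rw [← Real.norm_eq_abs]
      simpa using this
    -- expand and compute the total integral of Dq
    have hqA_meas : Measurable fun ω => Real.arctan (A ω) := hq_meas.comp hA
    have hqA2_int : ∀ a : ℝ, Integrable (fun ω => Real.arctan (A ω)^2) (ν a) := by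
      intro a
      refine Integrable.mono' (integrable_const (4:ℝ))
        ((hqA_meas.pow measurable_const)).aestronglyMeasurable ?_
      refine Filter.Eventually.of_forall fun ω => ?_
      rw [Real.norm_eq_abs, abs_pow]
      calc |Real.arctan (A ω)| ^ 2 ≤ 2 ^ 2 := pow_le_pow_left₀ (abs_nonneg _) (hq_bdd _) 2
        _ = 4 := by norm_num
    have hqA_int : ∀ a : ℝ, Integrable (fun ω => Real.arctan (A ω)) (ν a) := by
      intro a
      refine Integrable.mono' (integrable_const (2:ℝ)) hqA_meas.aestronglyMeasurable ?_
      exact Filter.Eventually.of_forall fun ω => by rw [Real.norm_eq_abs]; exact hq_bdd _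
    have hDq_expand : ∀ a, Dq a = (∫ ω, Real.arctan (A ω)^2 ∂ν a)
        - 2 * Real.arctan a * (∫ ω, Real.arctan (A ω) ∂ν a) + Real.arctan a ^ 2 := by
      intro a
      rw [hDqdef]
      have hpt : ∀ ω, (Real.arctan (A ω) - Real.arctan a)^2
          = Real.arctan (A ω)^2 - 2 * Real.arctan a * Real.arctan (A ω) + Real.arctan a ^ 2 := by
        intro ω; ring
      simp_rw [hpt]
      have h1 : Integrable (fun ω => Real.arctan (A ω)^2
          - 2 * Real.arctan a * Real.arctan (A ω)) (ν a) :=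
        Integrable.sub (hqA2_int a) ((hqA_int a).const_mul _)
      have hadd := integral_add (μ := ν a) h1 (integrable_const (Real.arctan a ^ 2))
      have hsub := integral_sub (μ := ν a) (hqA2_int a) ((hqA_int a).const_mul
        (2 * Real.arctan a))
      rw [hadd, hsub, integral_const_mul, integral_const]
      simp
    have hE2 : ∫ a, (∫ ω, Real.arctan (A ω)^2 ∂ν a) ∂PA = ∫ ω, Real.arctan (A ω)^2 ∂P := by
      have := hν (fun _ => 1) (fun ω => Real.arctan (A ω)^2) measurable_const
        ⟨1, fun a => by norm_num⟩ (hqA_meas.pow measurable_const)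
        ⟨4, fun ω => by
          rw [abs_pow]
          calc |Real.arctan (A ω)| ^ 2 ≤ 2 ^ 2 := pow_le_pow_left₀ (abs_nonneg _) (hq_bdd _) 2
            _ = 4 := by norm_num⟩
      simp_rw [one_mul] at this
      exact this.symm
    have hE1 : ∫ a, Real.arctan a * (∫ ω, Real.arctan (A ω) ∂ν a) ∂PA
        = ∫ ω, Real.arctan (A ω)^2 ∂P := by
      have := hν Real.arctan (fun ω => Real.arctan (A ω)) hq_meas ⟨2, hq_bdd⟩
        hqA_meas ⟨2, fun ω => hq_bdd _⟩
      rw [← this]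
      refine integral_congr_ae (Filter.Eventually.of_forall fun ω => ?_)
      ring
    have hE3 : ∫ a, Real.arctan a ^ 2 ∂PA = ∫ ω, Real.arctan (A ω)^2 ∂P := by
      rw [hPAdef, integral_map hA.aemeasurable]
      exact ((hq_meas.pow measurable_const)).aestronglyMeasurable
    have hI2_int : Integrable (fun a => ∫ ω, Real.arctan (A ω)^2 ∂ν a) PA := by
      refine Integrable.mono' (integrable_const (4:ℝ))
        (hker _ (hqA_meas.pow measurable_const)).aestronglyMeasurable ?_
      refine Filter.Eventually.of_forall fun a => ?_
      have := norm_integral_le_of_norm_le_const (μ := ν a)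
        (f := fun ω => Real.arctan (A ω)^2) (C := 4)
        (Filter.Eventually.of_forall fun ω => by
          rw [Real.norm_eq_abs, abs_pow]
          calc |Real.arctan (A ω)| ^ 2 ≤ 2 ^ 2 := pow_le_pow_left₀ (abs_nonneg _) (hq_bdd _) 2
            _ = 4 := by norm_num)
      simpa using this
    have hI1_int : Integrable (fun a => Real.arctan a * (∫ ω, Real.arctan (A ω) ∂ν a)) PA := by
      refine Integrable.mono' (integrable_const (4:ℝ))
        (hq_meas.mul (hker _ hqA_meas)).aestronglyMeasurable ?_
      refine Filter.Eventually.of_forall fun a => ?_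
      rw [Real.norm_eq_abs, abs_mul]
      have h2 : |∫ ω, Real.arctan (A ω) ∂ν a| ≤ 2 := by
        have := norm_integral_le_of_norm_le_const (μ := ν a)
          (f := fun ω => Real.arctan (A ω)) (C := 2)
          (Filter.Eventually.of_forall fun ω => by rw [Real.norm_eq_abs]; exact hq_bdd _)
        simpa using this
      calc |Real.arctan a| * |∫ ω, Real.arctan (A ω) ∂ν a| ≤ 2 * 2 :=
            mul_le_mul (hq_bdd _) h2 (abs_nonneg _) (by norm_num)
        _ = 4 := by norm_num
    have hE3_int : Integrable (fun a => Real.arctan a ^ 2) PA := by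
      refine Integrable.mono' (integrable_const (4:ℝ))
        ((hq_meas.pow measurable_const)).aestronglyMeasurable ?_
      refine Filter.Eventually.of_forall fun a => ?_
      rw [Real.norm_eq_abs, abs_pow]
      calc |Real.arctan a| ^ 2 ≤ 2 ^ 2 := pow_le_pow_left₀ (abs_nonneg _) (hq_bdd _) 2
        _ = 4 := by norm_num
    have hDq_zero : ∫ a, Dq a ∂PA = 0 := by
      have : Dq = fun a => ((∫ ω, Real.arctan (A ω)^2 ∂ν a)
          - 2 * Real.arctan a * (∫ ω, Real.arctan (A ω) ∂ν a)) + Real.arctan a ^ 2 := by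
        funext a; rw [hDq_expand a]
      have hsubint : Integrable (fun a => (∫ ω, Real.arctan (A ω)^2 ∂ν a)
          - 2 * Real.arctan a * (∫ ω, Real.arctan (A ω) ∂ν a)) PA :=
        Integrable.sub hI2_int (by simpa [mul_assoc] using hI1_int.const_mul 2)
      have hadd := integral_add (μ := PA) hsubint hE3_int
      have hsub := integral_sub (μ := PA) hI2_int
        (by simpa [mul_assoc] using hI1_int.const_mul 2 :
          Integrable (fun a => 2 * Real.arctan a * (∫ ω, Real.arctan (A ω) ∂ν a)) PA)
      rw [this, hadd, hsub]
      have h2 : ∫ a, 2 * Real.arctan a * (∫ ω, Real.arctan (A ω) ∂ν a) ∂PA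
          = 2 * ∫ a, Real.arctan a * (∫ ω, Real.arctan (A ω) ∂ν a) ∂PA := by
        rw [← integral_const_mul]
        refine integral_congr_ae (Filter.Eventually.of_forall fun a => by ring)
      rw [h2, hE2, hE1, hE3]
      ring
    have hDq_ae := (integral_eq_zero_iff_of_nonneg hDq_nonneg hDq_int).1 hDq_zero
    filter_upwards [hDq_ae] with a ha
    have hint : Integrable (fun ω => (Real.arctan (A ω) - Real.arctan a)^2) (ν a) := by
      refine Integrable.mono' (integrable_const (16:ℝ))
        (((hqA_meas.sub measurable_const)).pow measurable_const).aestronglyMeasurable ?_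
      exact Filter.Eventually.of_forall fun ω => by rw [Real.norm_eq_abs]; exact hsq_bdd a ω
    have : ∀ᵐ ω ∂ν a, (Real.arctan (A ω) - Real.arctan a)^2 = 0 := by
      have h0 : ∫ ω, (Real.arctan (A ω) - Real.arctan a)^2 ∂ν a = 0 := ha
      have := (integral_eq_zero_iff_of_nonneg (fun ω => sq_nonneg _) hint).1 h0
      filter_upwards [this] with ω hω
      exact hω
    filter_upwards [this] with ω hω
    have : Real.arctan (A ω) = Real.arctan a := by
      have := pow_eq_zero_iff (n := 2) (by norm_num) |>.1 hω
      linarith [sub_eq_zero.1 this]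
    exact Real.arctan_injective this
  -- the key identity for truncated weights
  have key1 : ∀ u : ℝ → ℝ, Measurable u → ∀ Cu : ℝ, (∀ a, |u a| ≤ Cu) → ∀ n : ℕ,
      ∫ ω, u (A ω) * (T ω * min (W ω) (n:ℝ)) ∂P
        = ∫ v, ∫ a, (τ a v - τbar a v) * u a * min (f a) ((n:ℝ) * π a v) ∂volume ∂Q := by
    intro u hu Cu hCu n
    have hCu0 : 0 ≤ Cu := le_trans (abs_nonneg _) (hCu 0)
    set h₁ : ℝ → 𝒱 × 𝒮 → ℝ := fun a x => u a * Wn n a x.1 / ρt a x with hh₁def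
    have hh₁_meas : Measurable (Function.uncurry h₁) := by
      refine Measurable.div ?_ hρt_meas
      exact (hu.comp measurable_fst).mul ((hWn_meas n).comp
        (measurable_fst.prodMk (measurable_fst.comp measurable_snd)))
    have hh₁_bdd : ∀ a x, |h₁ a x| ≤ Cu * n / c := by
      intro a x
      rw [hh₁def]
      show |u a * Wn n a x.1 / ρt a x| ≤ Cu * n / c
      rw [abs_div, abs_of_pos (hρt_pos a x), abs_mul]
      refine div_le_div₀ (mul_nonneg hCu0 (Nat.cast_nonneg n)) ?_ hc (hρt_ge a x)
      rw [abs_of_nonneg (hWn0 n a x.1)]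
      exact mul_le_mul (hCu a) (hWn_le n a x.1) (hWn0 n a x.1) hCu0
    set h₂ : ℝ → 𝒱 × 𝒮 → ℝ := fun a x => (μ a x - μbar a x) * h₁ a x with hh₂def
    have hh₂_meas : Measurable (Function.uncurry h₂) := by
      exact (hμ_meas.sub hμbar_meas).mul hh₁_meas
    have hh₂_bdd : ∀ a x, |h₂ a x| ≤ (Cmu + Cm) * (Cu * n / c) := by
      intro a x
      rw [hh₂def]
      show |(μ a x - μbar a x) * h₁ a x| ≤ _
      rw [abs_mul]
      refine mul_le_mul ?_ (hh₁_bdd a x) (abs_nonneg _) ?_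
      · exact le_trans (abs_sub _ _) (add_le_add (hCmu a x) (hCm a x))
      · exact le_trans (abs_nonneg _) (le_trans (abs_sub (μ a x) (μbar a x))
          (add_le_add (hCmu a x) (hCm a x)))
    set h₃ : ℝ → 𝒱 → ℝ := fun a v => u a * Wn n a v with hh₃def
    have hh₃_meas : Measurable (Function.uncurry h₃) :=
      (hu.comp measurable_fst).mul (hWn_meas n)
    have hh₃_bdd : ∀ a v, |h₃ a v| ≤ Cu * n := by
      intro a v
      rw [hh₃def]
      show |u a * Wn n a v| ≤ _
      rw [abs_mul, abs_of_nonneg (hWn0 n a v)]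
      exact mul_le_mul (hCu a) (hWn_le n a v) (hWn0 n a v) hCu0
    -- split the integrand
    have hsplit : (fun ω => u (A ω) * (T ω * min (W ω) (n:ℝ)))
        = fun ω => (R ω * Y ω * h₁ (A ω) (V ω, S ω)
            - R ω * μbar (A ω) (V ω, S ω) * h₁ (A ω) (V ω, S ω))
            + (μbar (A ω) (V ω, S ω) - τbar (A ω) (V ω)) * h₃ (A ω) (V ω) := by
      funext ω
      simp only [hh₁def, hh₃def, hTdef, hWndef, hWdef]
      ring
    -- integrability of the pieces
    have hint1 : Integrable (fun ω => R ω * Y ω * h₁ (A ω) (V ω, S ω)) P := by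
      refine aux_int_bdd P _ ((hR.mul hY).mul (hh₁_meas.comp hX_meas)) (Cy * (Cu * n / c)) ?_
      intro ω
      rw [abs_mul, abs_mul]
      have h1 : |R ω| * |Y ω| ≤ 1 * Cy := mul_le_mul (hRabs ω) (hCy ω) (abs_nonneg _) zero_le_one
      rw [one_mul] at h1
      refine mul_le_mul h1 (hh₁_bdd _ _) (abs_nonneg _) ?_
      exact le_trans (abs_nonneg (Y ω)) (hCy ω)
    have hint2 : Integrable (fun ω => R ω * μbar (A ω) (V ω, S ω) * h₁ (A ω) (V ω, S ω)) P := by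
      refine aux_int_bdd P _ ((hR.mul hμbarA).mul (hh₁_meas.comp hX_meas)) (Cm * (Cu * n / c)) ?_
      intro ω
      rw [abs_mul, abs_mul]
      have h1 : |R ω| * |μbar (A ω) (V ω, S ω)| ≤ 1 * Cm :=
        mul_le_mul (hRabs ω) (hCm _ _) (abs_nonneg _) zero_le_one
      rw [one_mul] at h1
      refine mul_le_mul h1 (hh₁_bdd _ _) (abs_nonneg _) ?_
      exact le_trans (abs_nonneg _) (hCm (A ω) (V ω, S ω))
    have hint3 : Integrable (fun ω =>
        (μbar (A ω) (V ω, S ω) - τbar (A ω) (V ω)) * h₃ (A ω) (V ω)) P := by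
      refine aux_int_bdd P _ ((hμbarA.sub hτbarA).mul ((hh₃_meas.comp hAV_meas)))
        ((Cm + Ct) * (Cu * n)) ?_
      intro ω
      rw [abs_mul]
      refine mul_le_mul (le_trans (abs_sub _ _) (add_le_add (hCm _ _) (hCt _ _)))
        (hh₃_bdd _ _) (abs_nonneg _) ?_
      exact le_trans (abs_nonneg _) (le_trans (abs_sub (μbar (A ω) (V ω, S ω))
        (τbar (A ω) (V ω))) (add_le_add (hCm _ _) (hCt _ _)))
    have hint4 : Integrable (fun ω => μ (A ω) (V ω, S ω) * h₃ (A ω) (V ω)) P := by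
      refine aux_int_bdd P _ (hμA.mul (hh₃_meas.comp hAV_meas)) (Cmu * (Cu * n)) ?_
      intro ω
      rw [abs_mul]
      exact mul_le_mul (hCmu _ _) (hh₃_bdd _ _) (abs_nonneg _)
        (le_trans (abs_nonneg _) (hCmu (A ω) (V ω, S ω)))
    have hint5 : Integrable (fun ω => μbar (A ω) (V ω, S ω) * h₃ (A ω) (V ω)) P := by
      refine aux_int_bdd P _ (hμbarA.mul (hh₃_meas.comp hAV_meas)) (Cm * (Cu * n)) ?_
      intro ω
      rw [abs_mul]
      exact mul_le_mul (hCm _ _) (hh₃_bdd _ _) (abs_nonneg _)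
        (le_trans (abs_nonneg _) (hCm (A ω) (V ω, S ω)))
    have hint6 : Integrable (fun ω => τbar (A ω) (V ω) * h₃ (A ω) (V ω)) P := by
      refine aux_int_bdd P _ (hτbarA.mul (hh₃_meas.comp hAV_meas)) (Ct * (Cu * n)) ?_
      intro ω
      rw [abs_mul]
      exact mul_le_mul (hCt _ _) (hh₃_bdd _ _) (abs_nonneg _)
        (le_trans (abs_nonneg _) (hCt (A ω) (V ω)))
    -- step 1: use hμ to replace Y by μ
    have hstep1 : ∫ ω, R ω * Y ω * h₁ (A ω) (V ω, S ω) ∂P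
        = ∫ ω, R ω * μ (A ω) (V ω, S ω) * h₁ (A ω) (V ω, S ω) ∂P :=
      hμ h₁ hh₁_meas ⟨Cu * n / c, hh₁_bdd⟩
    -- step 2: use hρ on h₂
    have hstep2 : ∫ ω, R ω * h₂ (A ω) (V ω, S ω) ∂P
        = ∫ ω, ρ (A ω) (V ω, S ω) * h₂ (A ω) (V ω, S ω) ∂P :=
      hρ h₂ hh₂_meas ⟨(Cmu + Cm) * (Cu * n / c), hh₂_bdd⟩
    -- step 3 : replace ρ by ρt a.e., then simplify
    have hstep3 : ∫ ω, ρ (A ω) (V ω, S ω) * h₂ (A ω) (V ω, S ω) ∂P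
        = ∫ ω, (μ (A ω) (V ω, S ω) - μbar (A ω) (V ω, S ω)) * h₃ (A ω) (V ω) ∂P := by
      refine integral_congr_ae ?_
      filter_upwards [hρc] with ω hω
      have hρeq : ρt (A ω) (V ω, S ω) = ρ (A ω) (V ω, S ω) := max_eq_left hω
      rw [← hρeq]
      simp only [hh₂def, hh₁def, hh₃def]
      have hne : ρt (A ω) (V ω, S ω) ≠ 0 := ne_of_gt (hρt_pos _ _)
      field_simp
    -- step 4 : use hτ
    have hstep4 : ∫ ω, μ (A ω) (V ω, S ω) * h₃ (A ω) (V ω) ∂P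
        = ∫ ω, τ (A ω) (V ω) * h₃ (A ω) (V ω) ∂P :=
      hτ h₃ hh₃_meas ⟨Cu * n, hh₃_bdd⟩
    -- step 5 : use hdens
    have hstep5 : ∫ ω, (τ (A ω) (V ω) - τbar (A ω) (V ω)) * h₃ (A ω) (V ω) ∂P
        = ∫ v, ∫ a, ((τ a v - τbar a v) * h₃ a v) * π a v ∂volume ∂Q := by
      refine hdens (fun a v => (τ a v - τbar a v) * h₃ a v)
        ((hτ_meas.sub hτbar_meas).mul hh₃_meas) ⟨(Cτ + Ct) * (Cu * n), ?_⟩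
      intro a v
      rw [abs_mul]
      refine mul_le_mul (le_trans (abs_sub _ _) (add_le_add (hCτ _ _) (hCt _ _)))
        (hh₃_bdd _ _) (abs_nonneg _) ?_
      exact le_trans (abs_nonneg _) (le_trans (abs_sub (τ a v) (τbar a v))
        (add_le_add (hCτ _ _) (hCt _ _)))
    -- assemble
    have hint7 : Integrable (fun ω => τ (A ω) (V ω) * h₃ (A ω) (V ω)) P := by
      refine aux_int_bdd P _ (hτA.mul (hh₃_meas.comp hAV_meas)) (Cτ * (Cu * n)) ?_
      intro ω
      rw [abs_mul]
      exact mul_le_mul (hCτ _ _) (hh₃_bdd _ _) (abs_nonneg _)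
        (le_trans (abs_nonneg _) (hCτ (A ω) (V ω)))
    calc ∫ ω, u (A ω) * (T ω * min (W ω) (n:ℝ)) ∂P
        = ∫ ω, (R ω * Y ω * h₁ (A ω) (V ω, S ω)
            - R ω * μbar (A ω) (V ω, S ω) * h₁ (A ω) (V ω, S ω))
            + (μbar (A ω) (V ω, S ω) - τbar (A ω) (V ω)) * h₃ (A ω) (V ω) ∂P := by
          rw [hsplit]
      _ = (∫ ω, R ω * Y ω * h₁ (A ω) (V ω, S ω) ∂P
            - ∫ ω, R ω * μbar (A ω) (V ω, S ω) * h₁ (A ω) (V ω, S ω) ∂P)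
            + ∫ ω, (μbar (A ω) (V ω, S ω) - τbar (A ω) (V ω)) * h₃ (A ω) (V ω) ∂P := by
          have hintD : Integrable (fun ω => R ω * Y ω * h₁ (A ω) (V ω, S ω)
              - R ω * μbar (A ω) (V ω, S ω) * h₁ (A ω) (V ω, S ω)) P := hint1.sub hint2
          rw [integral_add hintD hint3, integral_sub hint1 hint2]
      _ = (∫ ω, R ω * μ (A ω) (V ω, S ω) * h₁ (A ω) (V ω, S ω) ∂P
            - ∫ ω, R ω * μbar (A ω) (V ω, S ω) * h₁ (A ω) (V ω, S ω) ∂P)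
            + ∫ ω, (μbar (A ω) (V ω, S ω) - τbar (A ω) (V ω)) * h₃ (A ω) (V ω) ∂P := by
          rw [hstep1]
      _ = ∫ ω, R ω * h₂ (A ω) (V ω, S ω) ∂P
            + ∫ ω, (μbar (A ω) (V ω, S ω) - τbar (A ω) (V ω)) * h₃ (A ω) (V ω) ∂P := by
          congr 1
          have hint1'' : Integrable (fun ω =>
              R ω * μ (A ω) (V ω, S ω) * h₁ (A ω) (V ω, S ω)) P := by
            refine aux_int_bdd P _ ((hR.mul hμA).mul (hh₁_meas.comp hX_meas))
              (Cmu * (Cu * n / c)) ?_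
            intro ω
            rw [abs_mul, abs_mul]
            have h1 : |R ω| * |μ (A ω) (V ω, S ω)| ≤ 1 * Cmu :=
              mul_le_mul (hRabs ω) (hCmu _ _) (abs_nonneg _) zero_le_one
            rw [one_mul] at h1
            refine mul_le_mul h1 (hh₁_bdd _ _) (abs_nonneg _) ?_
            exact le_trans (abs_nonneg _) (hCmu (A ω) (V ω, S ω))
          rw [← integral_sub hint1'' hint2]
          refine integral_congr_ae (Filter.Eventually.of_forall fun ω => ?_)
          simp only [hh₂def]
          ring
      _ = ∫ ω, (μ (A ω) (V ω, S ω) - μbar (A ω) (V ω, S ω)) * h₃ (A ω) (V ω) ∂P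
            + ∫ ω, (μbar (A ω) (V ω, S ω) - τbar (A ω) (V ω)) * h₃ (A ω) (V ω) ∂P := by
          rw [hstep2, hstep3]
      _ = ∫ ω, μ (A ω) (V ω, S ω) * h₃ (A ω) (V ω) ∂P
            - ∫ ω, τbar (A ω) (V ω) * h₃ (A ω) (V ω) ∂P := by
          have hintA : Integrable (fun ω =>
              (μ (A ω) (V ω, S ω) - μbar (A ω) (V ω, S ω)) * h₃ (A ω) (V ω)) P := by
            refine aux_int_bdd P _ ((hμA.sub hμbarA).mul (hh₃_meas.comp hAV_meas))
              ((Cmu + Cm) * (Cu * n)) ?_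
            intro ω
            rw [abs_mul]
            refine mul_le_mul (le_trans (abs_sub _ _) (add_le_add (hCmu _ _) (hCm _ _)))
              (hh₃_bdd _ _) (abs_nonneg _) ?_
            exact le_trans (abs_nonneg _) (le_trans (abs_sub (μ (A ω) (V ω, S ω))
              (μbar (A ω) (V ω, S ω))) (add_le_add (hCmu _ _) (hCm _ _)))
          rw [← integral_add hintA hint3, ← integral_sub hint4 hint6]
          refine integral_congr_ae (Filter.Eventually.of_forall fun ω => ?_)
          ring
      _ = ∫ ω, (τ (A ω) (V ω) - τbar (A ω) (V ω)) * h₃ (A ω) (V ω) ∂P := by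
          rw [hstep4, ← integral_sub hint7 hint6]
          refine integral_congr_ae (Filter.Eventually.of_forall fun ω => ?_)
          ring
      _ = ∫ v, ∫ a, ((τ a v - τbar a v) * h₃ a v) * π a v ∂volume ∂Q := hstep5
      _ = ∫ v, ∫ a, (τ a v - τbar a v) * u a * min (f a) ((n:ℝ) * π a v) ∂volume ∂Q := by
          refine integral_congr_ae (Filter.Eventually.of_forall fun v => ?_)
          refine integral_congr_ae (Filter.Eventually.of_forall fun a => ?_)
          show ((τ a v - τbar a v) * h₃ a v) * π a v = _
          simp only [hh₃def]
          have hre : (τ a v - τbar a v) * (u a * Wn n a v) * π a v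
              = (τ a v - τbar a v) * u a * (Wn n a v * π a v) := by ring
          rw [hre, hWnπ n a v]
  -- limit of the truncated double integrals
  have hpos' : ∀ᵐ p ∂(Q.prod volume), 0 < π p.2 p.1 := by
    have hswap : (Q.prod volume).map Prod.swap = volume.prod Q :=
      Measure.prod_swap (μ := Q) (ν := (volume : Measure ℝ))
    have hs : MeasurableSet {p : ℝ × 𝒱 | 0 < π p.1 p.2} :=
      measurableSet_lt measurable_const hπ_meas
    have h1 : ∀ᵐ p ∂((Q.prod volume).map Prod.swap), 0 < π p.1 p.2 := by
      rw [hswap]; exact hπ_pos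
    have h2 := (MeasureTheory.ae_map_iff measurable_swap.aemeasurable hs).1 h1
    filter_upwards [h2] with p hp
    exact hp
  have key2 : ∀ u : ℝ → ℝ, Measurable u → ∀ Cu : ℝ, (∀ a, |u a| ≤ Cu) →
      Filter.Tendsto (fun n : ℕ =>
        ∫ v, ∫ a, (τ a v - τbar a v) * u a * min (f a) ((n:ℝ) * π a v) ∂volume ∂Q)
        Filter.atTop (nhds (∫ a, u a * (θ a - θbar a) ∂PA)) := by
    intro u hu Cu hCu
    have hCu0 : 0 ≤ Cu := le_trans (abs_nonneg _) (hCu 0)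
    set Ck : ℝ := (Cτ + Ct) * Cu with hCkdef
    have hCk0 : 0 ≤ Ck := mul_nonneg (by
      have := le_trans (abs_nonneg _) (hθ_bdd 0)
      have := le_trans (abs_nonneg _) (hθbar_bdd 0)
      linarith) hCu0
    have hk_bdd : ∀ a v, |(τ a v - τbar a v) * u a| ≤ Ck := by
      intro a v
      rw [abs_mul, hCkdef]
      refine mul_le_mul (le_trans (abs_sub _ _) (add_le_add (hCτ _ _) (hCt _ _)))
        (hCu a) (abs_nonneg _) ?_
      exact le_trans (abs_nonneg _) (le_trans (abs_sub (τ a v) (τbar a v))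
        (add_le_add (hCτ _ _) (hCt _ _)))
    -- integrability of f on the product
    have hfsnd_meas : Measurable (fun p : 𝒱 × ℝ => f p.2) := hf_meas.comp measurable_snd
    have hfprod : Integrable (fun p : 𝒱 × ℝ => f p.2) (Q.prod volume) := by
      refine ⟨hfsnd_meas.aestronglyMeasurable, ?_⟩
      rw [hasFiniteIntegral_iff_ofReal (Filter.Eventually.of_forall fun (p : 𝒱 × ℝ) => hf0 p.2)]
      have hme : Measurable (fun p : 𝒱 × ℝ => ENNReal.ofReal (f p.2)) :=
        ENNReal.measurable_ofReal.comp hfsnd_meas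
      calc ∫⁻ p : 𝒱 × ℝ, ENNReal.ofReal (f p.2) ∂(Q.prod volume)
          = ∫⁻ v, ∫⁻ a, ENNReal.ofReal (f a) ∂volume ∂Q := lintegral_prod _ hme.aemeasurable
        _ ≤ ∫⁻ _, 1 ∂Q := lintegral_mono fun v => hf_lint
        _ = 1 := by simp
        _ < ⊤ := ENNReal.one_lt_top
    have hkmeas : Measurable (fun p : 𝒱 × ℝ => (τ p.2 p.1 - τbar p.2 p.1) * u p.2) := by
      have h1 : Measurable (fun p : 𝒱 × ℝ => (p.2, p.1)) :=
        measurable_snd.prodMk measurable_fst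
      exact ((hτ_meas.comp h1).sub (hτbar_meas.comp h1)).mul (hu.comp measurable_snd)
    have hFn_meas : ∀ n : ℕ, Measurable (fun p : 𝒱 × ℝ =>
        (τ p.2 p.1 - τbar p.2 p.1) * u p.2 * min (f p.2) ((n:ℝ) * π p.2 p.1)) := by
      intro n
      have h1 : Measurable (fun p : 𝒱 × ℝ => (p.2, p.1)) :=
        measurable_snd.prodMk measurable_fst
      exact hkmeas.mul ((hf_meas.comp measurable_snd).min
        ((measurable_const.mul (hπ_meas.comp h1))))
    have hmin_bdd : ∀ (n : ℕ) (p : 𝒱 × ℝ), |min (f p.2) ((n:ℝ) * π p.2 p.1)| ≤ f p.2 := by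
      intro n p
      rw [abs_of_nonneg (le_min (hf0 p.2) (mul_nonneg (Nat.cast_nonneg n) (hπ_nonneg _ _)))]
      exact min_le_left _ _
    have hFn_int : ∀ n : ℕ, Integrable (fun p : 𝒱 × ℝ =>
        (τ p.2 p.1 - τbar p.2 p.1) * u p.2 * min (f p.2) ((n:ℝ) * π p.2 p.1)) (Q.prod volume) := by
      intro n
      refine Integrable.mono' (hfprod.const_mul Ck) (hFn_meas n).aestronglyMeasurable ?_
      refine Filter.Eventually.of_forall fun p => ?_
      rw [Real.norm_eq_abs, abs_mul]
      exact mul_le_mul (hk_bdd _ _) (hmin_bdd n p) (abs_nonneg _) hCk0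
    have hF_meas : Measurable (fun p : 𝒱 × ℝ =>
        (τ p.2 p.1 - τbar p.2 p.1) * u p.2 * f p.2) := hkmeas.mul hfsnd_meas
    have hF_int : Integrable (fun p : 𝒱 × ℝ =>
        (τ p.2 p.1 - τbar p.2 p.1) * u p.2 * f p.2) (Q.prod volume) := by
      refine Integrable.mono' (hfprod.const_mul Ck) hF_meas.aestronglyMeasurable ?_
      refine Filter.Eventually.of_forall fun p => ?_
      rw [Real.norm_eq_abs, abs_mul, abs_of_nonneg (hf0 p.2)]
      exact mul_le_mul_of_nonneg_right (hk_bdd _ _) (hf0 p.2)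
    -- dominated convergence on the product
    have htend : Filter.Tendsto (fun n : ℕ => ∫ p : 𝒱 × ℝ,
        (τ p.2 p.1 - τbar p.2 p.1) * u p.2 * min (f p.2) ((n:ℝ) * π p.2 p.1) ∂(Q.prod volume))
        Filter.atTop (nhds (∫ p : 𝒱 × ℝ,
        (τ p.2 p.1 - τbar p.2 p.1) * u p.2 * f p.2 ∂(Q.prod volume))) := by
      refine tendsto_integral_of_dominated_convergence (fun p => Ck * f p.2)
        (fun n => (hFn_meas n).aestronglyMeasurable) (hfprod.const_mul Ck) ?_ ?_
      · intro n
        refine Filter.Eventually.of_forall fun p => ?_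
        rw [Real.norm_eq_abs, abs_mul]
        exact mul_le_mul (hk_bdd _ _) (hmin_bdd n p) (abs_nonneg _) hCk0
      · filter_upwards [hpos'] with p hp
        refine Filter.Tendsto.const_mul _ ?_
        have : ∀ᶠ n : ℕ in Filter.atTop, min (f p.2) ((n:ℝ) * π p.2 p.1) = f p.2 := by
          rw [Filter.eventually_atTop]
          refine ⟨⌈f p.2 / π p.2 p.1⌉₊, fun n hn => ?_⟩
          refine min_eq_left ?_
          rw [← div_le_iff₀ hp]
          calc f p.2 / π p.2 p.1 ≤ (⌈f p.2 / π p.2 p.1⌉₊ : ℝ) := Nat.le_ceil _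
            _ ≤ n := Nat.cast_le.2 hn
        exact Filter.Tendsto.congr' (this.mono fun n hn => hn.symm) tendsto_const_nhds
    -- identify the two sides
    have hiter : ∀ n : ℕ, ∫ p : 𝒱 × ℝ,
        (τ p.2 p.1 - τbar p.2 p.1) * u p.2 * min (f p.2) ((n:ℝ) * π p.2 p.1) ∂(Q.prod volume)
        = ∫ v, ∫ a, (τ a v - τbar a v) * u a * min (f a) ((n:ℝ) * π a v) ∂volume ∂Q := by
      intro n
      exact integral_prod _ (hFn_int n)
    have hlimit : ∫ p : 𝒱 × ℝ, (τ p.2 p.1 - τbar p.2 p.1) * u p.2 * f p.2 ∂(Q.prod volume)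
        = ∫ a, u a * (θ a - θbar a) ∂PA := by
      have h1 : ∫ p : 𝒱 × ℝ, (τ p.2 p.1 - τbar p.2 p.1) * u p.2 * f p.2 ∂(Q.prod volume)
          = ∫ v, ∫ a, (τ a v - τbar a v) * u a * f a ∂volume ∂Q := integral_prod _ hF_int
      have h2 : ∫ v, ∫ a, (τ a v - τbar a v) * u a * f a ∂volume ∂Q
          = ∫ a, ∫ v, (τ a v - τbar a v) * u a * f a ∂Q ∂volume := by
        exact integral_integral_swap
          (f := fun (v : 𝒱) (a : ℝ) => (τ a v - τbar a v) * u a * f a) hF_int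
      have hτ_int : ∀ a : ℝ, Integrable (fun v => τ a v) Q :=
        fun a => aux_int_bdd Q _ hτ_meas.of_uncurry_left Cτ (hCτ a)
      have hτbar_int : ∀ a : ℝ, Integrable (fun v => τbar a v) Q :=
        fun a => aux_int_bdd Q _ hτbar_meas.of_uncurry_left Ct (hCt a)
      have h3 : ∀ a : ℝ, ∫ v, (τ a v - τbar a v) * u a * f a ∂Q
          = u a * (θ a - θbar a) * f a := by
        intro a
        have hre : (fun v => (τ a v - τbar a v) * u a * f a)
            = fun v => (τ a v - τbar a v) * (u a * f a) := by
          funext v; ring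
        rw [hre, integral_mul_const, integral_sub (hτ_int a) (hτbar_int a),
          ← hθ a, ← hθbar a]
        ring
      have h4 : ∫ a, ∫ v, (τ a v - τbar a v) * u a * f a ∂Q ∂volume
          = ∫ a, u a * (θ a - θbar a) * f a ∂volume := by
        refine integral_congr_ae (Filter.Eventually.of_forall fun a => ?_)
        exact h3 a
      have h5 : ∫ a, u a * (θ a - θbar a) ∂PA = ∫ a, u a * (θ a - θbar a) * f a ∂volume := by
        refine hdens_map (fun a => u a * (θ a - θbar a))
          (hu.mul (hθ_meas.sub hθbar_meas)) (Cu * (Cτ + Ct)) ?_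
        intro a
        rw [abs_mul]
        refine mul_le_mul (hCu a) (le_trans (abs_sub _ _)
          (add_le_add (hθ_bdd a) (hθbar_bdd a))) (abs_nonneg _) hCu0
      rw [h1, h2, h4, h5]
    refine Filter.Tendsto.congr (fun n => hiter n) ?_
    rw [← hlimit]
    exact htend
  -- kernel-side quantities
  have hmin_meas : ∀ n : ℕ, Measurable (fun ω => min (W ω) (n:ℝ)) :=
    fun n => hW_meas.min measurable_const
  have hmin_nonneg : ∀ (n : ℕ) ω, 0 ≤ min (W ω) (n:ℝ) :=
    fun n ω => le_min (hW0 ω) (Nat.cast_nonneg n)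
  have hmin_le_n : ∀ (n : ℕ) ω, min (W ω) (n:ℝ) ≤ n := fun n ω => min_le_right _ _
  have hmin_le_W : ∀ (n : ℕ) ω, min (W ω) (n:ℝ) ≤ W ω := fun n ω => min_le_left _ _
  set KN : ℕ → ℝ → ℝ≥0∞ := fun n a => ∫⁻ ω, ENNReal.ofReal (min (W ω) (n:ℝ)) ∂ν a with hKNdef
  set Lam : ℝ → ℝ≥0∞ := fun a => ∫⁻ ω, ENNReal.ofReal (W ω) ∂ν a with hLamdef
  have hKN_meas : ∀ n, Measurable (KN n) := by
    intro n
    exact Measurable.lintegral_kernel_prod_right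
      (f := fun (_ : ℝ) (ω : Ω) => ENNReal.ofReal (min (W ω) (n:ℝ)))
      ((ENNReal.measurable_ofReal.comp (hmin_meas n)).comp measurable_snd)
  have hLam_meas : Measurable Lam :=
    Measurable.lintegral_kernel_prod_right
      (f := fun (_ : ℝ) (ω : Ω) => ENNReal.ofReal (W ω))
      ((ENNReal.measurable_ofReal.comp hW_meas).comp measurable_snd)
  have hKN_fin : ∀ n a, KN n a ≤ ENNReal.ofReal n := by
    intro n a
    calc KN n a ≤ ∫⁻ _, ENNReal.ofReal n ∂ν a :=
          lintegral_mono fun ω => ENNReal.ofReal_le_ofReal (hmin_le_n n ω)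
      _ = ENNReal.ofReal n := by simp
  -- expectation of truncated weight at most 1
  have hEmin_le : ∀ n : ℕ, ∫ ω, min (W ω) (n:ℝ) ∂P ≤ 1 := by
    intro n
    have h1 : ∫ ω, min (W ω) (n:ℝ) ∂P = ∫ ω, Wn n (A ω) (V ω) ∂P := by
      refine integral_congr_ae (Filter.Eventually.of_forall fun ω => ?_)
      simp only [hWdef, hWndef]
    have h2 : ∫ ω, Wn n (A ω) (V ω) ∂P = ∫ v, ∫ a, Wn n a v * π a v ∂volume ∂Q :=
      hdens (Wn n) (hWn_meas n) ⟨n, fun a v => by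
        rw [abs_of_nonneg (hWn0 n a v)]; exact hWn_le n a v⟩
    have h3 : ∫ v, ∫ a, Wn n a v * π a v ∂volume ∂Q
        = ∫ v, ∫ a, min (f a) ((n:ℝ) * π a v) ∂volume ∂Q := by
      refine integral_congr_ae (Filter.Eventually.of_forall fun v => ?_)
      refine integral_congr_ae (Filter.Eventually.of_forall fun a => ?_)
      exact hWnπ n a v
    have hmin_int : ∀ v, Integrable (fun a => min (f a) ((n:ℝ) * π a v)) volume := by
      intro v
      refine Integrable.mono' hf_int
        ((hf_meas.min (measurable_const.mul (hπ_meas.comp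
          (measurable_id.prodMk measurable_const)))).aestronglyMeasurable) ?_
      refine Filter.Eventually.of_forall fun a => ?_
      rw [Real.norm_eq_abs,
        abs_of_nonneg (le_min (hf0 a) (mul_nonneg (Nat.cast_nonneg n) (hπ_nonneg a v)))]
      exact min_le_left _ _
    have hinner_le : ∀ v, ∫ a, min (f a) ((n:ℝ) * π a v) ∂volume ≤ ∫ a, f a ∂volume :=
      fun v => integral_mono (hmin_int v) hf_int (fun a => min_le_left _ _)
    have hinner_nonneg : ∀ v, 0 ≤ ∫ a, min (f a) ((n:ℝ) * π a v) ∂volume := by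
      intro v
      exact integral_nonneg fun a => le_min (hf0 a) (mul_nonneg (Nat.cast_nonneg n)
        (hπ_nonneg a v))
    have houter_meas : Measurable (fun v => ∫ a, min (f a) ((n:ℝ) * π a v) ∂volume) := by
      have h1 : StronglyMeasurable (Function.uncurry fun (v : 𝒱) (a : ℝ) =>
          min (f a) ((n:ℝ) * π a v)) := by
        refine Measurable.stronglyMeasurable ?_
        exact (hf_meas.comp measurable_snd).min
          (measurable_const.mul (hπ_meas.comp (measurable_snd.prodMk measurable_fst)))
      exact h1.integral_prod_right.measurable
    have houter_int : Integrable (fun v => ∫ a, min (f a) ((n:ℝ) * π a v) ∂volume) Q := by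
      refine aux_int_bdd Q _ houter_meas (∫ a, f a ∂volume) ?_
      intro v
      rw [abs_of_nonneg (hinner_nonneg v)]
      exact hinner_le v
    calc ∫ ω, min (W ω) (n:ℝ) ∂P
        = ∫ v, ∫ a, min (f a) ((n:ℝ) * π a v) ∂volume ∂Q := by rw [h1, h2, h3]
      _ ≤ ∫ _, (∫ a, f a ∂volume) ∂Q := integral_mono houter_int (integrable_const _) hinner_le
      _ = ∫ a, f a ∂volume := by simp
      _ ≤ 1 := hf_int_one
  -- lintegral of truncations over PA at most 1
  have hgn_eq : ∀ (n : ℕ) a, ∫ ω, min (W ω) (n:ℝ) ∂ν a = (KN n a).toReal := by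
    intro n a
    rw [integral_eq_lintegral_of_nonneg_ae (Filter.Eventually.of_forall (hmin_nonneg n))
      (hmin_meas n).aestronglyMeasurable]
  have hlint_KN : ∀ n : ℕ, ∫⁻ a, KN n a ∂PA ≤ 1 := by
    intro n
    have hg_meas : Measurable (fun a => ∫ ω, min (W ω) (n:ℝ) ∂ν a) := hker _ (hmin_meas n)
    have hg_nonneg : ∀ a, 0 ≤ ∫ ω, min (W ω) (n:ℝ) ∂ν a :=
      fun a => integral_nonneg (hmin_nonneg n)
    have hg_int : Integrable (fun a => ∫ ω, min (W ω) (n:ℝ) ∂ν a) PA := by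
      refine aux_int_bdd PA _ hg_meas n ?_
      intro a
      have := norm_integral_le_of_norm_le_const (μ := ν a)
        (f := fun ω => min (W ω) (n:ℝ)) (C := n)
        (Filter.Eventually.of_forall fun ω => by
          rw [Real.norm_eq_abs, abs_of_nonneg (hmin_nonneg n ω)]; exact hmin_le_n n ω)
      simpa using this
    have hEq : ∫ a, ∫ ω, min (W ω) (n:ℝ) ∂ν a ∂PA = ∫ ω, min (W ω) (n:ℝ) ∂P := by
      have := hν (fun _ => 1) (fun ω => min (W ω) (n:ℝ)) measurable_const
        ⟨1, fun a => by norm_num⟩ (hmin_meas n)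
        ⟨n, fun ω => by rw [abs_of_nonneg (hmin_nonneg n ω)]; exact hmin_le_n n ω⟩
      simp_rw [one_mul] at this
      exact this.symm
    calc ∫⁻ a, KN n a ∂PA
        = ∫⁻ a, ENNReal.ofReal (∫ ω, min (W ω) (n:ℝ) ∂ν a) ∂PA := by
          refine lintegral_congr fun a => ?_
          rw [hgn_eq n a, ENNReal.ofReal_toReal
            (ne_top_of_le_ne_top ENNReal.ofReal_ne_top (hKN_fin n a))]
      _ = ENNReal.ofReal (∫ a, ∫ ω, min (W ω) (n:ℝ) ∂ν a ∂PA) :=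
          (ofReal_integral_eq_lintegral_ofReal hg_int
            (Filter.Eventually.of_forall hg_nonneg)).symm
      _ ≤ ENNReal.ofReal 1 := by
          refine ENNReal.ofReal_le_ofReal ?_
          rw [hEq]; exact hEmin_le n
      _ = 1 := ENNReal.ofReal_one
  -- monotone convergence
  have hsupW : ∀ ω, (⨆ n : ℕ, ENNReal.ofReal (min (W ω) (n:ℝ))) = ENNReal.ofReal (W ω) := by
    intro ω
    refine le_antisymm (iSup_le fun n => ENNReal.ofReal_le_ofReal (hmin_le_W n ω)) ?_
    refine le_iSup_of_le ⌈W ω⌉₊ (le_of_eq ?_)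
    rw [min_eq_left (Nat.le_ceil (W ω))]
  have hmin_mono : ∀ ω, Monotone fun n : ℕ => ENNReal.ofReal (min (W ω) (n:ℝ)) := by
    intro ω n m hnm
    exact ENNReal.ofReal_le_ofReal (min_le_min le_rfl (Nat.cast_le.2 hnm))
  have hLam_eq : ∀ a, Lam a = ⨆ n : ℕ, KN n a := by
    intro a
    rw [hLamdef]
    calc ∫⁻ ω, ENNReal.ofReal (W ω) ∂ν a
        = ∫⁻ ω, ⨆ n : ℕ, ENNReal.ofReal (min (W ω) (n:ℝ)) ∂ν a :=
          lintegral_congr fun ω => (hsupW ω).symm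
      _ = ⨆ n : ℕ, ∫⁻ ω, ENNReal.ofReal (min (W ω) (n:ℝ)) ∂ν a := by
          refine lintegral_iSup (fun n => ENNReal.measurable_ofReal.comp (hmin_meas n)) ?_
          intro n m hnm ω
          exact hmin_mono ω hnm
      _ = ⨆ n : ℕ, KN n a := rfl
  have hLam_lint : ∫⁻ a, Lam a ∂PA ≤ 1 := by
    calc ∫⁻ a, Lam a ∂PA = ∫⁻ a, ⨆ n : ℕ, KN n a ∂PA := lintegral_congr hLam_eq
      _ = ⨆ n : ℕ, ∫⁻ a, KN n a ∂PA := by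
          refine lintegral_iSup hKN_meas ?_
          intro n m hnm a
          exact lintegral_mono fun ω => hmin_mono ω hnm
      _ ≤ 1 := iSup_le hlint_KN
  have hLam_fin : ∀ᵐ a ∂PA, Lam a < ⊤ :=
    ae_lt_top hLam_meas (ne_top_of_le_ne_top ENNReal.one_ne_top hLam_lint)
  have hWint : ∀ᵐ a ∂PA, Integrable W (ν a) := by
    filter_upwards [hLam_fin] with a ha
    exact ⟨hW_meas.aestronglyMeasurable,
      (hasFiniteIntegral_iff_ofReal (Filter.Eventually.of_forall hW0)).2 ha⟩
  set HH : ℝ → ℝ := fun a => ∫ ω, W ω ∂ν a with hHHdef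
  have hHH_eq : ∀ a, HH a = (Lam a).toReal := by
    intro a
    show ∫ ω, W ω ∂ν a = (∫⁻ ω, ENNReal.ofReal (W ω) ∂ν a).toReal
    rw [integral_eq_lintegral_of_nonneg_ae (Filter.Eventually.of_forall hW0)
      hW_meas.aestronglyMeasurable]
  have hHH_meas : Measurable HH := hker W hW_meas
  have hHH_nonneg : ∀ a, 0 ≤ HH a := fun a => integral_nonneg hW0
  have hHH_int : Integrable HH PA := by
    refine ⟨hHH_meas.aestronglyMeasurable, ?_⟩
    rw [hasFiniteIntegral_iff_ofReal (Filter.Eventually.of_forall hHH_nonneg)]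
    calc ∫⁻ a, ENNReal.ofReal (HH a) ∂PA ≤ ∫⁻ a, Lam a ∂PA := by
          refine lintegral_mono fun a => ?_
          rw [hHH_eq a]
          exact ENNReal.ofReal_toReal_le
      _ ≤ 1 := hLam_lint
      _ < ⊤ := ENNReal.one_lt_top
  set Gn : ℕ → ℝ → ℝ := fun n a => ∫ ω, T ω * min (W ω) (n:ℝ) ∂ν a with hGndef
  set Gf : ℝ → ℝ := fun a => ∫ ω, T ω * W ω ∂ν a with hGfdef
  have hGn_meas : ∀ n, Measurable (Gn n) := fun n => hker _ (hT_meas.mul (hmin_meas n))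
  have hGf_meas : Measurable Gf := hker _ (hT_meas.mul hW_meas)
  have hGn_bdd_ae : ∀ᵐ a ∂PA, ∀ n : ℕ, |Gn n a| ≤ M * HH a := by
    filter_upwards [hWint] with a ha
    intro n
    have hmin_int : Integrable (fun ω => min (W ω) (n:ℝ)) (ν a) := by
      refine aux_int_bdd (ν a) _ (hmin_meas n) n ?_
      intro ω; rw [abs_of_nonneg (hmin_nonneg n ω)]; exact hmin_le_n n ω
    have h1 : ‖∫ ω, T ω * min (W ω) (n:ℝ) ∂ν a‖ ≤ ∫ ω, M * min (W ω) (n:ℝ) ∂ν a := by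
      refine norm_integral_le_of_norm_le (hmin_int.const_mul M) ?_
      refine Filter.Eventually.of_forall fun ω => ?_
      rw [Real.norm_eq_abs, abs_mul, abs_of_nonneg (hmin_nonneg n ω)]
      exact mul_le_mul_of_nonneg_right (hT_bdd ω) (hmin_nonneg n ω)
    have h2 : ∫ ω, M * min (W ω) (n:ℝ) ∂ν a ≤ M * HH a := by
      rw [integral_const_mul, hHHdef]
      exact mul_le_mul_of_nonneg_left
        (integral_mono hmin_int ha (hmin_le_W n)) hM0
    rw [hGndef]
    calc |∫ ω, T ω * min (W ω) (n:ℝ) ∂ν a| ≤ ∫ ω, M * min (W ω) (n:ℝ) ∂ν a := by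
          rw [← Real.norm_eq_abs]; exact h1
      _ ≤ M * HH a := h2
  have hGf_bdd_ae : ∀ᵐ a ∂PA, |Gf a| ≤ M * HH a := by
    filter_upwards [hWint] with a ha
    have h1 : ‖∫ ω, T ω * W ω ∂ν a‖ ≤ ∫ ω, M * W ω ∂ν a := by
      refine norm_integral_le_of_norm_le (ha.const_mul M) ?_
      refine Filter.Eventually.of_forall fun ω => ?_
      rw [Real.norm_eq_abs, abs_mul, abs_of_nonneg (hW0 ω)]
      exact mul_le_mul_of_nonneg_right (hT_bdd ω) (hW0 ω)
    rw [hGfdef]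
    calc |∫ ω, T ω * W ω ∂ν a| ≤ ∫ ω, M * W ω ∂ν a := by
          rw [← Real.norm_eq_abs]; exact h1
      _ = M * HH a := by rw [integral_const_mul, hHHdef]
  have hGf_int : Integrable Gf PA := by
    refine Integrable.mono' (hHH_int.const_mul M) hGf_meas.aestronglyMeasurable ?_
    filter_upwards [hGf_bdd_ae] with a ha
    rw [Real.norm_eq_abs]
    exact ha
  -- relate the P-integral to the kernel integrals
  have key3 : ∀ u : ℝ → ℝ, Measurable u → ∀ Cu : ℝ, (∀ a, |u a| ≤ Cu) → ∀ n : ℕ,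
      ∫ ω, u (A ω) * (T ω * min (W ω) (n:ℝ)) ∂P = ∫ a, u a * Gn n a ∂PA := by
    intro u hu Cu hCu n
    exact hν u (fun ω => T ω * min (W ω) (n:ℝ)) hu ⟨Cu, hCu⟩
      (hT_meas.mul (hmin_meas n))
      ⟨M * n, fun ω => by
        rw [abs_mul]
        refine mul_le_mul (hT_bdd ω) ?_ (abs_nonneg _) hM0
        rw [abs_of_nonneg (hmin_nonneg n ω)]
        exact hmin_le_n n ω⟩
  have key4 : ∀ u : ℝ → ℝ, Measurable u → ∀ Cu : ℝ, (∀ a, |u a| ≤ Cu) →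
      Filter.Tendsto (fun n : ℕ => ∫ a, u a * Gn n a ∂PA) Filter.atTop
        (nhds (∫ a, u a * Gf a ∂PA)) := by
    intro u hu Cu hCu
    have hCu0 : 0 ≤ Cu := le_trans (abs_nonneg _) (hCu 0)
    refine tendsto_integral_of_dominated_convergence (fun a => Cu * (M * HH a))
      (fun n => (hu.mul (hGn_meas n)).aestronglyMeasurable)
      ((hHH_int.const_mul M).const_mul Cu) ?_ ?_
    · intro n
      filter_upwards [hGn_bdd_ae] with a ha
      rw [Real.norm_eq_abs, abs_mul]
      refine mul_le_mul (hCu a) (ha n) (abs_nonneg _) hCu0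
    · filter_upwards [hWint] with a ha
      refine Filter.Tendsto.const_mul _ ?_
      refine tendsto_integral_of_dominated_convergence (fun ω => M * W ω)
        (fun n => (hT_meas.mul (hmin_meas n)).aestronglyMeasurable)
        (ha.const_mul M) ?_ ?_
      · intro n
        refine Filter.Eventually.of_forall fun ω => ?_
        rw [Real.norm_eq_abs, abs_mul, abs_of_nonneg (hmin_nonneg n ω)]
        exact mul_le_mul (hT_bdd ω) (hmin_le_W n ω) (hmin_nonneg n ω) hM0
      · refine Filter.Eventually.of_forall fun ω => ?_
        refine Filter.Tendsto.const_mul _ ?_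
        have hev : ∀ᶠ n : ℕ in Filter.atTop, W ω = min (W ω) (n:ℝ) := by
          rw [Filter.eventually_atTop]
          refine ⟨⌈W ω⌉₊, fun n hn => ?_⟩
          rw [min_eq_left (le_trans (Nat.le_ceil (W ω)) (Nat.cast_le.2 hn))]
        exact Filter.Tendsto.congr' hev tendsto_const_nhds
  have key5 : ∀ u : ℝ → ℝ, Measurable u → ∀ Cu : ℝ, (∀ a, |u a| ≤ Cu) →
      ∫ a, u a * Gf a ∂PA = ∫ a, u a * (θ a - θbar a) ∂PA := by
    intro u hu Cu hCu
    refine tendsto_nhds_unique (key4 u hu Cu hCu) ?_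
    refine Filter.Tendsto.congr (fun n => ?_) (key2 u hu Cu hCu)
    exact (key1 u hu Cu hCu n).symm.trans (key3 u hu Cu hCu n)
  -- conclude that Gf agrees a.e. with θ - θbar
  have hθθ_int : Integrable (fun a => θ a - θbar a) PA := by
    refine aux_int_bdd PA _ (hθ_meas.sub hθbar_meas) (Cτ + Ct) ?_
    intro a
    exact le_trans (abs_sub _ _) (add_le_add (hθ_bdd a) (hθbar_bdd a))
  have hGae : Gf =ᵐ[PA] fun a => θ a - θbar a := by
    refine ae_eq_of_forall_setIntegral_eq_of_sigmaFinite
      (fun s hs hμs => hGf_int.integrableOn)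
      (fun s hs hμs => hθθ_int.integrableOn) ?_
    intro s hs hμs
    have hind_bdd : ∀ a, |s.indicator (fun _ => (1:ℝ)) a| ≤ 1 := by
      intro a; by_cases h : a ∈ s <;> simp [Set.indicator_apply, h]
    have h5 := key5 (s.indicator (fun _ => (1:ℝ)))
      (measurable_const.indicator hs) 1 hind_bdd
    have hL : (fun a => s.indicator (fun _ => (1:ℝ)) a * Gf a) = s.indicator Gf := by
      funext a; by_cases h : a ∈ s <;> simp [Set.indicator_apply, h]
    have hRR : (fun a => s.indicator (fun _ => (1:ℝ)) a * (θ a - θbar a))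
        = s.indicator (fun a => θ a - θbar a) := by
      funext a; by_cases h : a ∈ s <;> simp [Set.indicator_apply, h]
    rw [← integral_indicator hs, ← integral_indicator hs, ← hL, ← hRR]
    exact h5
  -- final assembly
  filter_upwards [hAeq, hρae, hWint, hGae] with a ha1 ha2 ha3 ha4
  have hTW_int : Integrable (fun ω => T ω * W ω) (ν a) := by
    refine Integrable.mono' (ha3.const_mul M) (hT_meas.mul hW_meas).aestronglyMeasurable ?_
    refine Filter.Eventually.of_forall fun ω => ?_
    rw [Real.norm_eq_abs, abs_mul, abs_of_nonneg (hW0 ω)]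
    exact mul_le_mul_of_nonneg_right (hT_bdd ω) (hW0 ω)
  have hcongr : (fun ω => (R ω * (Y ω - μbar (A ω) (V ω, S ω)) / ρ (A ω) (V ω, S ω)
        + μbar (A ω) (V ω, S ω) - τbar (A ω) (V ω)) * (f (A ω) / π (A ω) (V ω))
        + θbar (A ω)) =ᵐ[ν a] (fun ω => T ω * W ω + θbar a) := by
    filter_upwards [ha1, ha2] with ω h1 h2
    have hre : ρt (A ω) (V ω, S ω) = ρ (A ω) (V ω, S ω) := max_eq_left h2
    simp only [hTdef, hWdef]
    rw [hre, h1]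
  rw [integral_congr_ae hcongr, integral_add hTW_int (integrable_const _), integral_const]
  have hGfa : ∫ ω, T ω * W ω ∂ν a = Gf a := rfl
  rw [hGfa, ha4]
  simp
end

section
/- Assume positivity and ρ(A,X) ≥ c > 0 almost surely. Then for P_A-almost every a, the conditional variance of the true pseudo-outcome satisfies Var(φ(Z) | A = a) = E[(Var(Y | A=a, X, R=1)/ρ(a,X) + Var(μ(a,X) | A=a, V))·w(a,V)² | A = a]. -/
open MeasureTheory ProbabilityTheory Filter Topology
open scoped ENNReal NNReal

namespace Stmt7Aux

lemma integrable_of_bdd {α : Type*} [MeasurableSpace α] {μ : Measure α} [IsFiniteMeasure μ]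
    {g : α → ℝ} (hg : AEStronglyMeasurable g μ) {C : ℝ} (hC : ∀ x, |g x| ≤ C) :
    Integrable g μ :=
  ⟨hg, HasFiniteIntegral.of_bounded (C := C) (Filter.Eventually.of_forall fun x => by
    simpa [Real.norm_eq_abs] using hC x)⟩

lemma key_ae {Q : Measure ℝ} [IsProbabilityMeasure Q] {m₁ m₂ : ℝ → ℝ}
    (h₁ : AEStronglyMeasurable m₁ Q) (h₂ : AEStronglyMeasurable m₂ Q)
    {C₁ C₂ : ℝ} (b₁ : ∀ a, |m₁ a| ≤ C₁) (b₂ : ∀ a, |m₂ a| ≤ C₂)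
    (h : ∀ u : ℝ → ℝ, Measurable u → (∃ C, ∀ a, |u a| ≤ C) →
      ∫ a, u a * m₁ a ∂Q = ∫ a, u a * m₂ a ∂Q) :
    m₁ =ᵐ[Q] m₂ := by
  refine ae_eq_of_forall_setIntegral_eq_of_sigmaFinite
    (fun s _ _ => (integrable_of_bdd h₁ b₁).integrableOn)
    (fun s _ _ => (integrable_of_bdd h₂ b₂).integrableOn) (fun s hs _ => ?_)
  have hu : Measurable (s.indicator fun _ => (1:ℝ)) := measurable_const.indicator hs
  have key := h _ hu ⟨1, fun a => by
    by_cases hx : a ∈ s <;> simp [Set.indicator_of_mem, Set.indicator_of_notMem, hx]⟩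
  have e : ∀ m : ℝ → ℝ,
      (∫ a, (s.indicator fun _ => (1:ℝ)) a * m a ∂Q) = ∫ a in s, m a ∂Q := by
    intro m
    rw [← integral_indicator hs]
    congr 1; ext a
    by_cases hx : a ∈ s <;> simp [Set.indicator_of_mem, Set.indicator_of_notMem, hx]
  rw [e m₁, e m₂] at key; exact key

lemma variance_ae_congr {Ω : Type*} [MeasurableSpace Ω] {μ : Measure Ω} {X Y : Ω → ℝ}
    (h : X =ᵐ[μ] Y) : variance X μ = variance Y μ := by
  have hm : μ[X] = μ[Y] := integral_congr_ae h
  unfold ProbabilityTheory.variance ProbabilityTheory.evariance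
  rw [hm, lintegral_congr_ae (h.mono fun ω hω => by rw [hω])]

lemma variance_add_const {Ω : Type*} [MeasurableSpace Ω] {μ : Measure Ω} [IsProbabilityMeasure μ]
    {X : Ω → ℝ} (hX : Integrable X μ) (b : ℝ) :
    variance (fun ω => X ω + b) μ = variance X μ := by
  unfold ProbabilityTheory.variance ProbabilityTheory.evariance
  have hm : ∫ ω, (X ω + b) ∂μ = (∫ ω, X ω ∂μ) + b := by
    rw [integral_add hX (integrable_const b), integral_const]; simp
  congr 1
  refine lintegral_congr fun ω => ?_
  rw [hm, show X ω + b - ((∫ ω, X ω ∂μ) + b) = X ω - ∫ ω, X ω ∂μ by ring]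

end Stmt7Aux

open Stmt7Aux

set_option maxHeartbeats 1000000 in
/-- **conditional variance of the true pseudo-outcome.** Under positivity and
`ρ(A,X) ≥ c > 0` a.s., the true pseudo-outcome
`φ(Z) = [R(Y − μ(A,X))/ρ(A,X) + μ(A,X) − τ(A,V)]·w(A,V) + θ(A)` with stabilized weight
`w(a,v) = f(a)/π(a|v)` satisfies, for `P_A`-almost every `a`,
`Var(φ(Z) | A = a) = E[(Var(Y | A=a, X, R=1)/ρ(a,X) + Var(μ(a,X) | A=a, V))·w(a,V)² | A = a]`,
where `σY²(a,x)` is a version of `Var(Y | A=a, X=x, R=1)` and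
`Var(μ(a,X) | A=a, V) = E[(μ(a,X) − τ(a,V))² | A=a, V]`. -/
theorem stmt_7 {𝒱 𝒮 Ω : Type*} [MeasurableSpace 𝒱] [MeasurableSpace 𝒮] [MeasurableSpace Ω]
    (P : Measure Ω) [IsProbabilityMeasure P]
    (V : Ω → 𝒱) (S : Ω → 𝒮) (A Y R : Ω → ℝ)
    (hV : Measurable V) (hS : Measurable S) (hA : Measurable A)
    (hY : Measurable Y) (hR : Measurable R)
    (hY_bdd : ∃ C, ∀ ω, |Y ω| ≤ C)
    (hR01 : ∀ ω, R ω = 0 ∨ R ω = 1)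
    -- conditional density π(a|v) of A given V, w.r.t. Lebesgue measure
    (π : ℝ → 𝒱 → ℝ) (hπ_meas : Measurable (Function.uncurry π))
    (hπ_nonneg : ∀ a v, 0 ≤ π a v)
    (hdens : ∀ g : ℝ → 𝒱 → ℝ, Measurable (Function.uncurry g) →
      (∃ C, ∀ a v, |g a v| ≤ C) →
      ∫ ω, g (A ω) (V ω) ∂P = ∫ v, ∫ a, g a v * π a v ∂volume ∂(P.map V))
    (f : ℝ → ℝ) (hf : ∀ a, f a = ∫ v, π a v ∂(P.map V))
    -- positivity
    (hπ_pos : ∀ᵐ p ∂(volume.prod (P.map V)), 0 < π p.1 p.2)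
    (c : ℝ) (hc : 0 < c)
    -- true labeling propensity ρ, a version of P(R=1 | A, X), bounded below
    (ρ : ℝ → 𝒱 × 𝒮 → ℝ) (hρ_meas : Measurable (Function.uncurry ρ))
    (hρ : ∀ h : ℝ → 𝒱 × 𝒮 → ℝ, Measurable (Function.uncurry h) →
      (∃ C, ∀ a x, |h a x| ≤ C) →
      ∫ ω, R ω * h (A ω) (V ω, S ω) ∂P = ∫ ω, ρ (A ω) (V ω, S ω) * h (A ω) (V ω, S ω) ∂P)
    (hρc : ∀ᵐ ω ∂P, c ≤ ρ (A ω) (V ω, S ω))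
    -- true outcome regression μ, a version of E[Y | A, X, R=1]
    (μ : ℝ → 𝒱 × 𝒮 → ℝ) (hμ_meas : Measurable (Function.uncurry μ))
    (hμ_bdd : ∃ C, ∀ a x, |μ a x| ≤ C)
    (hμ : ∀ h : ℝ → 𝒱 × 𝒮 → ℝ, Measurable (Function.uncurry h) →
      (∃ C, ∀ a x, |h a x| ≤ C) →
      ∫ ω, R ω * Y ω * h (A ω) (V ω, S ω) ∂P
        = ∫ ω, R ω * μ (A ω) (V ω, S ω) * h (A ω) (V ω, S ω) ∂P)
    -- τ, a version of E[μ(A,X) | A, V]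
    (τ : ℝ → 𝒱 → ℝ) (hτ_meas : Measurable (Function.uncurry τ))
    (hτ_bdd : ∃ C, ∀ a v, |τ a v| ≤ C)
    (hτ : ∀ h : ℝ → 𝒱 → ℝ, Measurable (Function.uncurry h) →
      (∃ C, ∀ a v, |h a v| ≤ C) →
      ∫ ω, μ (A ω) (V ω, S ω) * h (A ω) (V ω) ∂P = ∫ ω, τ (A ω) (V ω) * h (A ω) (V ω) ∂P)
    -- dose-response function
    (θ : ℝ → ℝ) (hθ : ∀ a, θ a = ∫ v, τ a v ∂(P.map V))
    -- regular conditional distribution of Z given A = a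
    (ν : Kernel ℝ Ω) [IsMarkovKernel ν]
    (hν : ∀ (u : ℝ → ℝ) (F : Ω → ℝ), Measurable u → (∃ C, ∀ a, |u a| ≤ C) →
      Measurable F → (∃ C, ∀ ω, |F ω| ≤ C) →
      ∫ ω, u (A ω) * F ω ∂P = ∫ a, u a * ∫ ω, F ω ∂(ν a) ∂(P.map A))
    -- stabilized weight
    (w : ℝ → 𝒱 → ℝ) (hw : ∀ a v, w a v = f a / π a v)
    -- σY², a version of the conditional variance Var(Y | A, X, R = 1)
    (σY2 : ℝ → 𝒱 × 𝒮 → ℝ) (hσY2_meas : Measurable (Function.uncurry σY2))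
    (hσY2_bdd : ∃ B, ∀ a x, |σY2 a x| ≤ B)
    (hσY2 : ∀ h : ℝ → 𝒱 × 𝒮 → ℝ, Measurable (Function.uncurry h) →
      (∃ B, ∀ a x, |h a x| ≤ B) →
      ∫ ω, R ω * (Y ω - μ (A ω) (V ω, S ω)) ^ 2 * h (A ω) (V ω, S ω) ∂P
        = ∫ ω, R ω * σY2 (A ω) (V ω, S ω) * h (A ω) (V ω, S ω) ∂P) :
    ∀ᵐ a ∂(P.map A),
      variance
          (fun ω =>
            (R ω * (Y ω - μ (A ω) (V ω, S ω)) / ρ (A ω) (V ω, S ω)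
                + μ (A ω) (V ω, S ω) - τ (A ω) (V ω)) * w (A ω) (V ω)
              + θ (A ω))
          (ν a)
        = ∫ ω, (σY2 a (V ω, S ω) / ρ a (V ω, S ω)
              + (μ a (V ω, S ω) - τ a (V ω)) ^ 2) * (w a (V ω)) ^ 2 ∂(ν a) := by
  classical
  haveI hPA : IsProbabilityMeasure (P.map A) := Measure.isProbabilityMeasure_map hA.aemeasurable
  haveI hPV : IsProbabilityMeasure (P.map V) := Measure.isProbabilityMeasure_map hV.aemeasurable
  obtain ⟨CY, hCY⟩ := hY_bdd
  obtain ⟨Cμ, hCμ⟩ := hμ_bdd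
  obtain ⟨Cτ, hCτ⟩ := hτ_bdd
  obtain ⟨Cσ, hCσ⟩ := hσY2_bdd
  -- measurability atoms
  have hXm : Measurable fun ω => (V ω, S ω) := hV.prodMk hS
  have hAXm : Measurable fun ω => (A ω, (V ω, S ω)) := hA.prodMk hXm
  have hAVm : Measurable fun ω => (A ω, V ω) := hA.prodMk hV
  have hμm : Measurable fun ω => μ (A ω) (V ω, S ω) := hμ_meas.comp hAXm
  have hτm : Measurable fun ω => τ (A ω) (V ω) := hτ_meas.comp hAVm
  have hρm : Measurable fun ω => ρ (A ω) (V ω, S ω) := hρ_meas.comp hAXm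
  have hσm : Measurable fun ω => σY2 (A ω) (V ω, S ω) := hσY2_meas.comp hAXm
  have hfm : Measurable f := by
    have hfe : f = fun a => ∫ v, π a v ∂(P.map V) := funext hf
    rw [hfe]
    exact (hπ_meas.stronglyMeasurable.integral_prod_right).measurable
  have hwm : Measurable (Function.uncurry w) := by
    have : Function.uncurry w = fun p : ℝ × 𝒱 => f p.1 / π p.1 p.2 := by
      ext p; simp [Function.uncurry, hw]
    rw [this]; exact (hfm.comp measurable_fst).div hπ_meas
  have hw0 : ∀ a v, 0 ≤ w a v := fun a v => by
    rw [hw]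
    exact div_nonneg (by rw [hf]; exact integral_nonneg fun v => hπ_nonneg a v) (hπ_nonneg a v)
  -- clamped propensity
  set ρc : ℝ → 𝒱 × 𝒮 → ℝ := fun a x => max (ρ a x) c with hρc_def
  have hρcm : Measurable (Function.uncurry ρc) := hρ_meas.max measurable_const
  have hρcm' : Measurable fun ω => ρc (A ω) (V ω, S ω) := hρcm.comp hAXm
  have hρc_pos : ∀ a x, 0 < ρc a x := fun a x => lt_of_lt_of_le hc (le_max_right _ _)
  have hρc_ge : ∀ a x, c ≤ ρc a x := fun a x => le_max_right _ _
  -- truncated weights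
  set wn : ℕ → ℝ → 𝒱 → ℝ := fun n a v => min (w a v) n with hwn_def
  have hwnm : ∀ n, Measurable (Function.uncurry (wn n)) := fun n => hwm.min measurable_const
  have hwnm' : ∀ n, Measurable fun ω => wn n (A ω) (V ω) := fun n => (hwnm n).comp hAVm
  have hwn0 : ∀ n a v, 0 ≤ wn n a v := fun n a v => le_min (hw0 a v) (Nat.cast_nonneg n)
  have hwn_le : ∀ n a v, wn n a v ≤ w a v := fun n a v => min_le_left _ _
  have hwn_bd : ∀ n a v, |wn n a v| ≤ n := fun n a v => by
    rw [abs_of_nonneg (hwn0 n a v)]; exact min_le_right _ _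
  -- kernel integral measurability
  have hker : ∀ F : Ω → ℝ, Measurable F → StronglyMeasurable fun a => ∫ ω, F ω ∂(ν a) := by
    intro F hF
    exact StronglyMeasurable.integral_kernel_prod_right'
      (f := fun p : ℝ × Ω => F p.2) (hF.stronglyMeasurable.comp_measurable measurable_snd)
  have hker_bd : ∀ (F : Ω → ℝ) (C : ℝ), (∀ ω, |F ω| ≤ C) → ∀ a, |∫ ω, F ω ∂(ν a)| ≤ C := by
    intro F C hC a
    calc |∫ ω, F ω ∂(ν a)| ≤ C * ((ν a) Set.univ).toReal := by
          rw [← Real.norm_eq_abs]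
          exact norm_integral_le_of_norm_le_const (Eventually.of_forall fun ω => by
            simpa [Real.norm_eq_abs] using hC ω)
      _ = C := by simp
  -- C1: equality of conditional means
  have hC1 : ∀ (F G : Ω → ℝ), Measurable F → Measurable G →
      (∃ C, ∀ ω, |F ω| ≤ C) → (∃ C, ∀ ω, |G ω| ≤ C) →
      (∀ u : ℝ → ℝ, Measurable u → (∃ C, ∀ a, |u a| ≤ C) →
        ∫ ω, u (A ω) * F ω ∂P = ∫ ω, u (A ω) * G ω ∂P) →
      ∀ᵐ a ∂(P.map A), ∫ ω, F ω ∂(ν a) = ∫ ω, G ω ∂(ν a) := by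
    rintro F G hF hG ⟨CF, hCF⟩ ⟨CG, hCG⟩ hFG
    refine key_ae ((hker F hF).aestronglyMeasurable) ((hker G hG).aestronglyMeasurable)
      (hker_bd F CF hCF) (hker_bd G CG hCG) ?_
    intro u hu hub
    rw [← hν u F hu hub hF ⟨CF, hCF⟩, ← hν u G hu hub hG ⟨CG, hCG⟩]
    exact hFG u hu hub
  -- C1': conditional mean equal to a function of a
  have hC1' : ∀ (F : Ω → ℝ) (g : ℝ → ℝ), Measurable F → Measurable g →
      (∃ C, ∀ ω, |F ω| ≤ C) → (∃ C, ∀ a, |g a| ≤ C) →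
      (∀ u : ℝ → ℝ, Measurable u → (∃ C, ∀ a, |u a| ≤ C) →
        ∫ ω, u (A ω) * F ω ∂P = ∫ ω, u (A ω) * g (A ω) ∂P) →
      ∀ᵐ a ∂(P.map A), ∫ ω, F ω ∂(ν a) = g a := by
    rintro F g hF hg ⟨CF, hCF⟩ ⟨Cg, hCg⟩ hFG
    refine key_ae ((hker F hF).aestronglyMeasurable) hg.aestronglyMeasurable
      (hker_bd F CF hCF) hCg ?_
    intro u hu hub
    obtain ⟨Cu, hCu⟩ := hub
    rw [← hν u F hu ⟨Cu, hCu⟩ hF ⟨CF, hCF⟩]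
    have h2 := hν (fun a => u a * g a) (fun _ => (1:ℝ)) (hu.mul hg)
      ⟨Cu * Cg, fun a => by
        rw [abs_mul]
        exact mul_le_mul (hCu a) (hCg a) (abs_nonneg _) ((abs_nonneg _).trans (hCu 0))⟩
      measurable_const ⟨1, fun ω => by simp⟩
    simp only [mul_one, integral_const, measure_univ, ENNReal.toReal_one, probReal_univ, one_smul, smul_eq_mul] at h2
    rw [hFG u hu ⟨Cu, hCu⟩, h2]
  -- transfer of a.s. events to the kernel
  have hT : ∀ E : Set Ω, MeasurableSet E → (∀ᵐ ω ∂P, ω ∈ E) →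
      ∀ᵐ a ∂(P.map A), ∀ᵐ ω ∂(ν a), ω ∈ E := by
    intro E hE hPE
    have h0 : ∀ᵐ a ∂(P.map A), ∫ ω, (Eᶜ.indicator (fun _ => (1:ℝ))) ω ∂(ν a) = (fun _ => (0:ℝ)) a := by
      apply hC1' _ _ (measurable_const.indicator hE.compl) measurable_const
        ⟨1, fun ω => by by_cases h : ω ∈ Eᶜ <;>
          simp [Set.indicator_of_mem, Set.indicator_of_notMem, h]⟩
        ⟨0, fun a => by simp⟩
      intro u hu hub
      have he : (fun ω => u (A ω) * (Eᶜ.indicator (fun _ => (1:ℝ))) ω) =ᵐ[P]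
          (fun ω => u (A ω) * (fun _ => (0:ℝ)) (A ω)) := by
        filter_upwards [hPE] with ω hω
        simp [Set.indicator_of_notMem (show ω ∉ Eᶜ by simpa using hω)]
      rw [integral_congr_ae he]
    filter_upwards [h0] with a ha
    rw [integral_indicator_const (1:ℝ) hE.compl] at ha
    simp only [smul_eq_mul, mul_one] at ha
    have : (ν a) Eᶜ = 0 := by
      have hfin : (ν a) Eᶜ ≠ ⊤ := measure_ne_top _ _
      exact (ENNReal.toReal_eq_zero_iff _).mp ha |>.resolve_right hfin
    exact mem_ae_iff.mpr this
  -- Step A : under ν a, A = a almost surely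
  have harct_bd : ∀ x : ℝ, |Real.arctan x| ≤ 2 := fun x => by
    have h1 := Real.arctan_lt_pi_div_two x
    have h2 := Real.neg_pi_div_two_lt_arctan x
    have := Real.pi_le_four
    rw [abs_le]; constructor <;> nlinarith
  have hq : ∀ᵐ a ∂(P.map A), ∫ ω, Real.arctan (A ω) ∂(ν a) = Real.arctan a :=
    hC1' _ _ (Real.measurable_arctan.comp hA) Real.measurable_arctan
      ⟨2, fun ω => harct_bd _⟩ ⟨2, fun a => harct_bd _⟩ (fun u hu hub => rfl)
  have hr : ∀ᵐ a ∂(P.map A), ∫ ω, Real.arctan (A ω) ^ 2 ∂(ν a) = Real.arctan a ^ 2 :=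
    hC1' _ _ ((Real.measurable_arctan.comp hA).pow_const 2) (Real.measurable_arctan.pow_const 2)
      ⟨4, fun ω => by rw [abs_pow]; nlinarith [harct_bd (A ω), abs_nonneg (Real.arctan (A ω))]⟩
      ⟨4, fun a => by rw [abs_pow]; nlinarith [harct_bd a, abs_nonneg (Real.arctan a)]⟩
      (fun u hu hub => rfl)
  have hAa : ∀ᵐ a ∂(P.map A), ∀ᵐ ω ∂(ν a), A ω = a := by
    filter_upwards [hq, hr] with a hqa hra
    have hint : Integrable (fun ω => Real.arctan (A ω)) (ν a) :=
      integrable_of_bdd ((Real.measurable_arctan.comp hA).aestronglyMeasurable)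
        (fun ω => harct_bd _)
    have hint2 : Integrable (fun ω => Real.arctan (A ω) ^ 2) (ν a) :=
      integrable_of_bdd (((Real.measurable_arctan.comp hA).pow_const 2).aestronglyMeasurable)
        (C := 4) (fun ω => by rw [abs_pow]; nlinarith [harct_bd (A ω), abs_nonneg (Real.arctan (A ω))])
    have hsq_int : Integrable (fun ω => (Real.arctan (A ω) - Real.arctan a) ^ 2) (ν a) := by
      have : (fun ω => (Real.arctan (A ω) - Real.arctan a) ^ 2)
          = fun ω => Real.arctan (A ω) ^ 2 - 2 * Real.arctan a * Real.arctan (A ω)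
              + Real.arctan a ^ 2 := funext fun ω => by ring
      rw [this]
      exact (hint2.sub (hint.const_mul _)).add (integrable_const _)
    have hzero : ∫ ω, (Real.arctan (A ω) - Real.arctan a) ^ 2 ∂(ν a) = 0 := by
      have he : (fun ω => (Real.arctan (A ω) - Real.arctan a) ^ 2)
          = fun ω => Real.arctan (A ω) ^ 2 - 2 * Real.arctan a * Real.arctan (A ω)
              + Real.arctan a ^ 2 := funext fun ω => by ring
      have ia : Integrable (fun ω => Real.arctan (A ω) ^ 2
          - 2 * Real.arctan a * Real.arctan (A ω)) (ν a) :=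
        hint2.sub (hint.const_mul (2 * Real.arctan a))
      rw [he, integral_add ia (integrable_const (Real.arctan a ^ 2)),
        integral_sub hint2 (hint.const_mul (2 * Real.arctan a)),
        integral_const_mul, integral_const, hqa, hra]
      simp; ring
    have := (integral_eq_zero_iff_of_nonneg_ae
      (Eventually.of_forall fun ω => sq_nonneg _) hsq_int).mp hzero
    filter_upwards [this] with ω hω
    have : Real.arctan (A ω) - Real.arctan a = 0 := by
      have := hω
      simp only [Pi.zero_apply] at this
      exact (pow_eq_zero_iff two_ne_zero).mp this
    exact Real.arctan_injective (by linarith)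
  -- small helpers
  have habs_mul : ∀ x y X Z : ℝ, |x| ≤ X → |y| ≤ Z → |x * y| ≤ X * Z := by
    intro x y X Z hx hy
    rw [abs_mul]
    exact mul_le_mul hx hy (abs_nonneg _) ((abs_nonneg _).trans hx)
  have hdiv_bd : ∀ x r X : ℝ, c ≤ r → |x| ≤ X → |x / r| ≤ X / c := by
    intro x r X hr hx
    rw [abs_div, abs_of_nonneg (le_trans hc.le hr)]
    exact div_le_div₀ ((abs_nonneg x).trans hx) hx hc hr
  have hR_bd : ∀ ω, |R ω| ≤ 1 := fun ω => by rcases hR01 ω with h | h <;> rw [h] <;> norm_num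
  have hR0 : ∀ ω, 0 ≤ R ω := fun ω => by rcases hR01 ω with h | h <;> rw [h] <;> norm_num
  have hRR : ∀ ω, R ω * R ω = R ω := fun ω => by rcases hR01 ω with h | h <;> rw [h] <;> ring
  -- σY2 is a.s. nonnegative along (A, X)
  have hσ_pos : ∀ᵐ ω ∂P, 0 ≤ σY2 (A ω) (V ω, S ω) := by
    set h0 : ℝ → 𝒱 × 𝒮 → ℝ := fun a x => if σY2 a x < 0 then (1:ℝ) else 0 with hh0_def
    have hDm : MeasurableSet {p : ℝ × (𝒱 × 𝒮) | σY2 p.1 p.2 < 0} :=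
      measurableSet_lt hσY2_meas measurable_const
    have h0m : Measurable (Function.uncurry h0) :=
      Measurable.ite hDm measurable_const measurable_const
    have h0b : ∀ a x, |h0 a x| ≤ 1 := fun a x => by
      simp only [hh0_def]; split <;> norm_num
    have h0nn : ∀ a x, 0 ≤ h0 a x := fun a x => by
      simp only [hh0_def]; split <;> norm_num
    have key1 := hσY2 h0 h0m ⟨1, h0b⟩
    -- ∫ R σY2 h0 = ∫ R (Y-μ)² h0 ≥ 0, with R σY2 h0 ≤ 0 pointwise
    have hle : ∀ ω, R ω * σY2 (A ω) (V ω, S ω) * h0 (A ω) (V ω, S ω) ≤ 0 := by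
      intro ω
      by_cases hσ : σY2 (A ω) (V ω, S ω) < 0
      · have : h0 (A ω) (V ω, S ω) = 1 := by simp only [hh0_def]; rw [if_pos hσ]
        rw [this, mul_one]
        exact mul_nonpos_of_nonneg_of_nonpos (hR0 ω) hσ.le
      · have : h0 (A ω) (V ω, S ω) = 0 := by simp only [hh0_def]; rw [if_neg hσ]
        rw [this, mul_zero]
    have hint0 : Integrable (fun ω => R ω * σY2 (A ω) (V ω, S ω) * h0 (A ω) (V ω, S ω)) P := by
      refine integrable_of_bdd (C := 1 * |Cσ| * 1)
        (((hR.mul hσm).mul ((h0m.comp hAXm))).aestronglyMeasurable) (fun ω => ?_)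
      exact habs_mul _ _ _ _ (habs_mul _ _ _ _ (hR_bd ω) ((hCσ _ _).trans (le_abs_self _)))
        (h0b _ _)
    have hge : 0 ≤ ∫ ω, R ω * σY2 (A ω) (V ω, S ω) * h0 (A ω) (V ω, S ω) ∂P := by
      rw [← key1]
      exact integral_nonneg fun ω =>
        mul_nonneg (mul_nonneg (hR0 ω) (sq_nonneg _)) (h0nn _ _)
    have hzero1 : (fun ω => -(R ω * σY2 (A ω) (V ω, S ω) * h0 (A ω) (V ω, S ω))) =ᵐ[P] 0 := by
      refine (integral_eq_zero_iff_of_nonneg_ae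
        (Eventually.of_forall fun ω => neg_nonneg.mpr (hle ω)) hint0.neg).mp ?_
      rw [integral_neg]
      have hle' : ∫ ω, R ω * σY2 (A ω) (V ω, S ω) * h0 (A ω) (V ω, S ω) ∂P ≤ 0 :=
        integral_nonpos fun ω => hle ω
      linarith
    -- now use hρ with h0/ρc
    set h1f : ℝ → 𝒱 × 𝒮 → ℝ := fun a x => h0 a x / ρc a x with hh1f_def
    have h1fm : Measurable (Function.uncurry h1f) := h0m.div hρcm
    have h1fb : ∀ a x, |h1f a x| ≤ 1 / c := fun a x =>
      hdiv_bd _ _ _ (hρc_ge a x) (h0b a x)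
    have key2 := hρ h1f h1fm ⟨1 / c, h1fb⟩
    have hRh0 : (fun ω => R ω * h1f (A ω) (V ω, S ω)) =ᵐ[P] 0 := by
      filter_upwards [hzero1] with ω hω
      simp only [hh1f_def]
      simp only [Pi.zero_apply, neg_eq_zero] at hω ⊢
      by_cases hσ : σY2 (A ω) (V ω, S ω) < 0
      · have h1 : h0 (A ω) (V ω, S ω) = 1 := by simp only [hh0_def]; rw [if_pos hσ]
        rw [h1, mul_one] at hω
        rw [h1]
        rcases mul_eq_zero.mp hω with h | h
        · rw [h]; ring
        · exact absurd h hσ.ne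
      · have h1 : h0 (A ω) (V ω, S ω) = 0 := by simp only [hh0_def]; rw [if_neg hσ]
        rw [h1]; simp
    have hρh0 : ∫ ω, ρ (A ω) (V ω, S ω) * h1f (A ω) (V ω, S ω) ∂P = 0 := by
      rw [← key2, integral_congr_ae hRh0]
      simp
    have hre : (fun ω => ρ (A ω) (V ω, S ω) * h1f (A ω) (V ω, S ω)) =ᵐ[P]
        (fun ω => h0 (A ω) (V ω, S ω)) := by
      filter_upwards [hρc] with ω hω
      have hmax : ρc (A ω) (V ω, S ω) = ρ (A ω) (V ω, S ω) := by
        simp only [hρc_def]; exact max_eq_left hω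
      simp only [hh1f_def, hmax]
      rw [mul_div_assoc']
      exact mul_div_cancel_left₀ _ (hc.trans_le hω).ne'
    have hρh0_int : Integrable (fun ω => ρ (A ω) (V ω, S ω) * h1f (A ω) (V ω, S ω)) P :=
      (integrable_of_bdd (C := 1) ((h0m.comp hAXm).aestronglyMeasurable)
        (fun ω => h0b _ _)).congr hre.symm
    have hρh0_zero : (fun ω => ρ (A ω) (V ω, S ω) * h1f (A ω) (V ω, S ω)) =ᵐ[P] 0 := by
      refine (integral_eq_zero_iff_of_nonneg_ae ?_ hρh0_int).mp hρh0
      filter_upwards [hre] with ω hω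
      rw [hω]
      exact h0nn _ _
    filter_upwards [hρh0_zero.symm.trans hre, hρc] with ω hω hcω
    by_contra hneg
    push_neg at hneg
    have h1 : h0 (A ω) (V ω, S ω) = 1 := by simp only [hh0_def]; rw [if_pos hneg]
    simp only [Pi.zero_apply, h1] at hω
    exact zero_ne_one hω
  -- bounds for composite functions
  have hμτ_bd : ∀ (a : ℝ) (x : 𝒱 × 𝒮), |μ a x - τ a x.1| ≤ |Cμ| + |Cτ| := fun a x =>
    (abs_sub _ _).trans (add_le_add ((hCμ _ _).trans (le_abs_self _))
      ((hCτ _ _).trans (le_abs_self _)))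
  -- the (clamped) centered pseudo-outcome factor
  set B : Ω → ℝ := fun ω => R ω * (Y ω - μ (A ω) (V ω, S ω)) / ρc (A ω) (V ω, S ω)
      + μ (A ω) (V ω, S ω) - τ (A ω) (V ω) with hB_def
  have hBm : Measurable B := (((hR.mul (hY.sub hμm)).div hρcm').add hμm).sub hτm
  have hRYμ_bd : ∀ ω, |R ω * (Y ω - μ (A ω) (V ω, S ω))| ≤ |CY| + |Cμ| := by
    intro ω
    have hy := abs_le.mp ((hCY ω).trans (le_abs_self CY))
    have hm := abs_le.mp ((hCμ (A ω) (V ω, S ω)).trans (le_abs_self Cμ))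
    rcases hR01 ω with h | h <;> rw [h]
    · simpa using add_nonneg (abs_nonneg CY) (abs_nonneg Cμ)
    · rw [one_mul, abs_le]; constructor <;> linarith
  have hB_bd : ∀ ω, |B ω| ≤ (|CY| + |Cμ|) / c + |Cμ| + |Cτ| := by
    intro ω
    have h5 : |R ω * (Y ω - μ (A ω) (V ω, S ω)) / ρc (A ω) (V ω, S ω)| ≤ (|CY| + |Cμ|) / c :=
      hdiv_bd _ _ _ (hρc_ge _ _) (hRYμ_bd ω)
    have h6 := abs_le.mp h5
    have h7 := abs_le.mp ((hCμ (A ω) (V ω, S ω)).trans (le_abs_self _))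
    have h8 := abs_le.mp ((hCτ (A ω) (V ω)).trans (le_abs_self _))
    simp only [hB_def]
    rw [abs_le]
    constructor <;> linarith
  -- per-n : conditional mean of B * wn is 0
  have hmean : ∀ n : ℕ, ∀ᵐ a ∂(P.map A),
      ∫ ω, B ω * wn n (A ω) (V ω) ∂(ν a) = 0 := by
    intro n
    have key := hC1' (fun ω => B ω * wn n (A ω) (V ω)) (fun _ => (0:ℝ))
      (hBm.mul (hwnm' n)) measurable_const
      ⟨((|CY| + |Cμ|) / c + |Cμ| + |Cτ|) * n,
        fun ω => habs_mul _ _ _ _ (hB_bd ω) (hwn_bd n _ _)⟩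
      ⟨0, fun a => by simp⟩ ?_
    · filter_upwards [key] with a ha using ha
    intro u hu hub
    obtain ⟨Cu, hCu⟩ := hub
    set h5 : ℝ → 𝒱 × 𝒮 → ℝ := fun a x => u a * wn n a x.1 / ρc a x with hh5
    have h5m : Measurable (Function.uncurry h5) := by
      refine Measurable.div ?_ hρcm
      exact (hu.comp measurable_fst).mul
        ((hwnm n).comp (measurable_fst.prodMk (measurable_snd.fst)))
    have h5b : ∀ (a : ℝ) (x : 𝒱 × 𝒮), |h5 a x| ≤ |Cu| * n / c := fun a x =>
      hdiv_bd _ _ _ (hρc_ge a x)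
        (habs_mul _ _ _ _ ((hCu a).trans (le_abs_self _)) (hwn_bd n a x.1))
    set h4 : ℝ → 𝒱 → ℝ := fun a v => u a * wn n a v with hh4
    have h4m : Measurable (Function.uncurry h4) := (hu.comp measurable_fst).mul (hwnm n)
    have h4b : ∀ (a : ℝ) (v : 𝒱), |h4 a v| ≤ |Cu| * n := fun a v =>
      habs_mul _ _ _ _ ((hCu a).trans (le_abs_self _)) (hwn_bd n a v)
    have key5 := hμ h5 h5m ⟨|Cu| * n / c, h5b⟩
    have key4 := hτ h4 h4m ⟨|Cu| * n, h4b⟩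
    have i1 : Integrable (fun ω => R ω * Y ω * h5 (A ω) (V ω, S ω)) P :=
      integrable_of_bdd (C := 1 * |CY| * (|Cu| * n / c))
        (((hR.mul hY).mul ((h5m.comp hAXm))).aestronglyMeasurable)
        (fun ω => habs_mul _ _ _ _
          (habs_mul _ _ _ _ (hR_bd ω) ((hCY ω).trans (le_abs_self _))) (h5b _ _))
    have i2 : Integrable (fun ω => R ω * μ (A ω) (V ω, S ω) * h5 (A ω) (V ω, S ω)) P :=
      integrable_of_bdd (C := 1 * |Cμ| * (|Cu| * n / c))
        (((hR.mul hμm).mul ((h5m.comp hAXm))).aestronglyMeasurable)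
        (fun ω => habs_mul _ _ _ _
          (habs_mul _ _ _ _ (hR_bd ω) ((hCμ _ _).trans (le_abs_self _))) (h5b _ _))
    have i3 : Integrable (fun ω => μ (A ω) (V ω, S ω) * h4 (A ω) (V ω)) P :=
      integrable_of_bdd (C := |Cμ| * (|Cu| * n))
        ((hμm.mul ((h4m.comp hAVm))).aestronglyMeasurable)
        (fun ω => habs_mul _ _ _ _ ((hCμ _ _).trans (le_abs_self _)) (h4b _ _))
    have i4 : Integrable (fun ω => τ (A ω) (V ω) * h4 (A ω) (V ω)) P :=
      integrable_of_bdd (C := |Cτ| * (|Cu| * n))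
        ((hτm.mul ((h4m.comp hAVm))).aestronglyMeasurable)
        (fun ω => habs_mul _ _ _ _ ((hCτ _ _).trans (le_abs_self _)) (h4b _ _))
    have i12 : Integrable (fun ω => R ω * Y ω * h5 (A ω) (V ω, S ω)
        - R ω * μ (A ω) (V ω, S ω) * h5 (A ω) (V ω, S ω)) P := i1.sub i2
    have i34 : Integrable (fun ω => μ (A ω) (V ω, S ω) * h4 (A ω) (V ω)
        - τ (A ω) (V ω) * h4 (A ω) (V ω)) P := i3.sub i4
    have hpt : ∀ ω, u (A ω) * (B ω * wn n (A ω) (V ω))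
        = (R ω * Y ω * h5 (A ω) (V ω, S ω) - R ω * μ (A ω) (V ω, S ω) * h5 (A ω) (V ω, S ω))
          + (μ (A ω) (V ω, S ω) * h4 (A ω) (V ω) - τ (A ω) (V ω) * h4 (A ω) (V ω)) := by
      intro ω
      have hne := (hρc_pos (A ω) (V ω, S ω)).ne'
      simp only [hB_def, hh5, hh4]
      field_simp
      ring
    calc ∫ ω, u (A ω) * (B ω * wn n (A ω) (V ω)) ∂P
        = ∫ ω, ((R ω * Y ω * h5 (A ω) (V ω, S ω)
              - R ω * μ (A ω) (V ω, S ω) * h5 (A ω) (V ω, S ω))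
            + (μ (A ω) (V ω, S ω) * h4 (A ω) (V ω)
              - τ (A ω) (V ω) * h4 (A ω) (V ω))) ∂P :=
          integral_congr_ae (Eventually.of_forall hpt)
      _ = ((∫ ω, R ω * Y ω * h5 (A ω) (V ω, S ω) ∂P)
            - ∫ ω, R ω * μ (A ω) (V ω, S ω) * h5 (A ω) (V ω, S ω) ∂P)
          + ((∫ ω, μ (A ω) (V ω, S ω) * h4 (A ω) (V ω) ∂P)
            - ∫ ω, τ (A ω) (V ω) * h4 (A ω) (V ω) ∂P) := by
          rw [integral_add i12 i34, integral_sub i1 i2, integral_sub i3 i4]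
      _ = 0 := by rw [key5, key4]; ring
      _ = ∫ ω, u (A ω) * (fun _ => (0:ℝ)) (A ω) ∂P := by simp
  have hdiv_bd2 : ∀ x r X : ℝ, c ≤ r → |x| ≤ X → |x / r ^ 2| ≤ X / c ^ 2 := by
    intro x r X hr hx
    rw [abs_div, abs_of_nonneg (pow_nonneg (le_trans hc.le hr) 2)]
    exact div_le_div₀ ((abs_nonneg x).trans hx) hx (pow_pos hc 2)
      (pow_le_pow_left₀ hc.le hr 2)
  -- per-n second-moment identity
  set Hn : ℕ → Ω → ℝ := fun n ω => (σY2 (A ω) (V ω, S ω) / ρc (A ω) (V ω, S ω)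
      + (μ (A ω) (V ω, S ω) - τ (A ω) (V ω)) ^ 2) * wn n (A ω) (V ω) ^ 2 with hHn_def
  have hHnm : ∀ n, Measurable (Hn n) := fun n =>
    ((hσm.div hρcm').add ((hμm.sub hτm).pow_const 2)).mul ((hwnm' n).pow_const 2)
  have hHn_bd : ∀ n ω, |Hn n ω| ≤ (|Cσ| / c + (|Cμ| + |Cτ|) ^ 2) * (n:ℝ) ^ 2 := by
    intro n ω
    refine habs_mul _ _ _ _ ?_ ?_
    · refine (abs_add_le _ _).trans (add_le_add
        (hdiv_bd _ _ _ (hρc_ge _ _) ((hCσ _ _).trans (le_abs_self _))) ?_)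
      rw [abs_pow]
      exact pow_le_pow_left₀ (abs_nonneg _) (hμτ_bd (A ω) (V ω, S ω)) 2
    · rw [abs_pow]
      exact pow_le_pow_left₀ (abs_nonneg _) (hwn_bd n _ _) 2
  have hsq : ∀ n : ℕ, ∀ᵐ a ∂(P.map A),
      ∫ ω, (B ω * wn n (A ω) (V ω)) ^ 2 ∂(ν a) = ∫ ω, Hn n ω ∂(ν a) := by
    intro n
    refine hC1 (fun ω => (B ω * wn n (A ω) (V ω)) ^ 2) (Hn n)
      ((hBm.mul (hwnm' n)).pow_const 2) (hHnm n)
      ⟨(((|CY| + |Cμ|) / c + |Cμ| + |Cτ|) * n) ^ 2, fun ω => by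
        rw [abs_pow]
        exact pow_le_pow_left₀ (abs_nonneg _)
          (habs_mul _ _ _ _ (hB_bd ω) (hwn_bd n _ _)) 2⟩
      ⟨(|Cσ| / c + (|Cμ| + |Cτ|) ^ 2) * (n:ℝ) ^ 2, hHn_bd n⟩ ?_
    intro u hu hub
    obtain ⟨Cu, hCu⟩ := hub
    set h1 : ℝ → 𝒱 × 𝒮 → ℝ := fun a x => u a * wn n a x.1 ^ 2 / ρc a x ^ 2 with hh1
    set h2 : ℝ → 𝒱 × 𝒮 → ℝ := fun a x =>
      2 * u a * (μ a x - τ a x.1) * wn n a x.1 ^ 2 / ρc a x with hh2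
    set h3 : ℝ → 𝒱 × 𝒮 → ℝ := fun a x => σY2 a x * h1 a x with hh3
    have hwnx : Measurable fun p : ℝ × (𝒱 × 𝒮) => wn n p.1 p.2.1 :=
      (hwnm n).comp (measurable_fst.prodMk (measurable_snd.fst))
    have h1m : Measurable (Function.uncurry h1) :=
      ((hu.comp measurable_fst).mul (hwnx.pow_const 2)).div (hρcm.pow_const 2)
    have h2m : Measurable (Function.uncurry h2) := by
      refine Measurable.div ?_ hρcm
      exact (((measurable_const.mul (hu.comp measurable_fst)).mul
        ((hμ_meas.sub ((hτ_meas.comp (measurable_fst.prodMk (measurable_snd.fst))))))).mul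
        (hwnx.pow_const 2))
    have h3m : Measurable (Function.uncurry h3) := hσY2_meas.mul h1m
    have h1b : ∀ (a : ℝ) (x : 𝒱 × 𝒮), |h1 a x| ≤ |Cu| * (n:ℝ) ^ 2 / c ^ 2 := fun a x => by
      refine hdiv_bd2 _ _ _ (hρc_ge a x) ?_
      refine habs_mul _ _ _ _ ((hCu a).trans (le_abs_self _)) ?_
      rw [abs_pow]
      exact pow_le_pow_left₀ (abs_nonneg _) (hwn_bd n a x.1) 2
    have h2b : ∀ (a : ℝ) (x : 𝒱 × 𝒮),
        |h2 a x| ≤ 2 * |Cu| * (|Cμ| + |Cτ|) * (n:ℝ) ^ 2 / c := fun a x => by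
      refine hdiv_bd _ _ _ (hρc_ge a x) ?_
      refine habs_mul _ _ _ _ (habs_mul _ _ _ _ ?_ (hμτ_bd a x)) ?_
      · rw [abs_mul, abs_two]
        exact mul_le_mul_of_nonneg_left ((hCu a).trans (le_abs_self _)) (by norm_num)
      · rw [abs_pow]
        exact pow_le_pow_left₀ (abs_nonneg _) (hwn_bd n a x.1) 2
    have h3b : ∀ (a : ℝ) (x : 𝒱 × 𝒮),
        |h3 a x| ≤ |Cσ| * (|Cu| * (n:ℝ) ^ 2 / c ^ 2) := fun a x =>
      habs_mul _ _ _ _ ((hCσ _ _).trans (le_abs_self _)) (h1b a x)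
    have keyA := hσY2 h1 h1m ⟨_, h1b⟩
    have keyB := hμ h2 h2m ⟨_, h2b⟩
    have keyC := hρ h3 h3m ⟨_, h3b⟩
    have hYμ2_bd : ∀ ω, |(Y ω - μ (A ω) (V ω, S ω)) ^ 2| ≤ (|CY| + |Cμ|) ^ 2 := fun ω => by
      rw [abs_pow]
      refine pow_le_pow_left₀ (abs_nonneg _) ?_ 2
      exact (abs_sub _ _).trans (add_le_add ((hCY ω).trans (le_abs_self _))
        ((hCμ _ _).trans (le_abs_self _)))
    have j1 : Integrable (fun ω => R ω * (Y ω - μ (A ω) (V ω, S ω)) ^ 2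
        * h1 (A ω) (V ω, S ω)) P :=
      integrable_of_bdd (C := 1 * (|CY| + |Cμ|) ^ 2 * (|Cu| * (n:ℝ) ^ 2 / c ^ 2))
        (((hR.mul ((hY.sub hμm).pow_const 2)).mul (h1m.comp hAXm)).aestronglyMeasurable)
        (fun ω => habs_mul _ _ _ _ (habs_mul _ _ _ _ (hR_bd ω) (hYμ2_bd ω)) (h1b _ _))
    have j1' : Integrable (fun ω => R ω * σY2 (A ω) (V ω, S ω) * h1 (A ω) (V ω, S ω)) P :=
      integrable_of_bdd (C := 1 * |Cσ| * (|Cu| * (n:ℝ) ^ 2 / c ^ 2))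
        (((hR.mul hσm).mul (h1m.comp hAXm)).aestronglyMeasurable)
        (fun ω => habs_mul _ _ _ _
          (habs_mul _ _ _ _ (hR_bd ω) ((hCσ _ _).trans (le_abs_self _))) (h1b _ _))
    have j2a : Integrable (fun ω => R ω * Y ω * h2 (A ω) (V ω, S ω)) P :=
      integrable_of_bdd (C := 1 * |CY| * (2 * |Cu| * (|Cμ| + |Cτ|) * (n:ℝ) ^ 2 / c))
        (((hR.mul hY).mul (h2m.comp hAXm)).aestronglyMeasurable)
        (fun ω => habs_mul _ _ _ _
          (habs_mul _ _ _ _ (hR_bd ω) ((hCY ω).trans (le_abs_self _))) (h2b _ _))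
    have j2b : Integrable (fun ω => R ω * μ (A ω) (V ω, S ω) * h2 (A ω) (V ω, S ω)) P :=
      integrable_of_bdd (C := 1 * |Cμ| * (2 * |Cu| * (|Cμ| + |Cτ|) * (n:ℝ) ^ 2 / c))
        (((hR.mul hμm).mul (h2m.comp hAXm)).aestronglyMeasurable)
        (fun ω => habs_mul _ _ _ _
          (habs_mul _ _ _ _ (hR_bd ω) ((hCμ _ _).trans (le_abs_self _))) (h2b _ _))
    have j3 : Integrable (fun ω => u (A ω) * (μ (A ω) (V ω, S ω) - τ (A ω) (V ω)) ^ 2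
        * wn n (A ω) (V ω) ^ 2) P :=
      integrable_of_bdd (C := |Cu| * (|Cμ| + |Cτ|) ^ 2 * (n:ℝ) ^ 2)
        ((((hu.comp hA).mul ((hμm.sub hτm).pow_const 2)).mul
          ((hwnm' n).pow_const 2)).aestronglyMeasurable)
        (fun ω => by
          refine habs_mul _ _ _ _ (habs_mul _ _ _ _ ((hCu _).trans (le_abs_self _)) ?_) ?_
          · rw [abs_pow]
            exact pow_le_pow_left₀ (abs_nonneg _) (hμτ_bd (A ω) (V ω, S ω)) 2
          · rw [abs_pow]
            exact pow_le_pow_left₀ (abs_nonneg _) (hwn_bd n _ _) 2)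
    have hρh3 : (fun ω => ρ (A ω) (V ω, S ω) * h3 (A ω) (V ω, S ω)) =ᵐ[P]
        (fun ω => u (A ω) * σY2 (A ω) (V ω, S ω) * wn n (A ω) (V ω) ^ 2
          / ρc (A ω) (V ω, S ω)) := by
      filter_upwards [hρc] with ω hω
      have hmax : ρc (A ω) (V ω, S ω) = ρ (A ω) (V ω, S ω) := max_eq_left hω
      have hne := (hρc_pos (A ω) (V ω, S ω)).ne'
      simp only [hh3, hh1]
      rw [← hmax]
      field_simp
    have j5 : Integrable (fun ω => ρ (A ω) (V ω, S ω) * h3 (A ω) (V ω, S ω)) P := by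
      refine (integrable_of_bdd (C := |Cu| * |Cσ| * (n:ℝ) ^ 2 / c) ?_ ?_).congr hρh3.symm
      · exact ((((hu.comp hA).mul hσm).mul ((hwnm' n).pow_const 2)).div
          hρcm').aestronglyMeasurable
      · intro ω
        refine hdiv_bd _ _ _ (hρc_ge _ _) ?_
        refine habs_mul _ _ _ _ (habs_mul _ _ _ _ ((hCu _).trans (le_abs_self _))
          ((hCσ _ _).trans (le_abs_self _))) ?_
        rw [abs_pow]
        exact pow_le_pow_left₀ (abs_nonneg _) (hwn_bd n _ _) 2
    have j12 : Integrable (fun ω => R ω * Y ω * h2 (A ω) (V ω, S ω)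
        - R ω * μ (A ω) (V ω, S ω) * h2 (A ω) (V ω, S ω)) P := j2a.sub j2b
    have hpt1 : ∀ ω, u (A ω) * (B ω * wn n (A ω) (V ω)) ^ 2
        = R ω * (Y ω - μ (A ω) (V ω, S ω)) ^ 2 * h1 (A ω) (V ω, S ω)
          + (R ω * Y ω * h2 (A ω) (V ω, S ω) - R ω * μ (A ω) (V ω, S ω) * h2 (A ω) (V ω, S ω))
          + u (A ω) * (μ (A ω) (V ω, S ω) - τ (A ω) (V ω)) ^ 2 * wn n (A ω) (V ω) ^ 2 := by
      intro ω
      have hne := (hρc_pos (A ω) (V ω, S ω)).ne'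
      rcases hR01 ω with h | h <;>
        · simp only [hB_def, hh1, hh2, h]
          field_simp
          ring
    calc ∫ ω, u (A ω) * (B ω * wn n (A ω) (V ω)) ^ 2 ∂P
        = ∫ ω, (R ω * (Y ω - μ (A ω) (V ω, S ω)) ^ 2 * h1 (A ω) (V ω, S ω)
            + (R ω * Y ω * h2 (A ω) (V ω, S ω)
              - R ω * μ (A ω) (V ω, S ω) * h2 (A ω) (V ω, S ω))
            + u (A ω) * (μ (A ω) (V ω, S ω) - τ (A ω) (V ω)) ^ 2
              * wn n (A ω) (V ω) ^ 2) ∂P := integral_congr_ae (Eventually.of_forall hpt1)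
      _ = (∫ ω, R ω * (Y ω - μ (A ω) (V ω, S ω)) ^ 2 * h1 (A ω) (V ω, S ω) ∂P)
          + ((∫ ω, R ω * Y ω * h2 (A ω) (V ω, S ω) ∂P)
            - ∫ ω, R ω * μ (A ω) (V ω, S ω) * h2 (A ω) (V ω, S ω) ∂P)
          + ∫ ω, u (A ω) * (μ (A ω) (V ω, S ω) - τ (A ω) (V ω)) ^ 2
              * wn n (A ω) (V ω) ^ 2 ∂P := by
          have j112 : Integrable (fun ω => R ω * (Y ω - μ (A ω) (V ω, S ω)) ^ 2
              * h1 (A ω) (V ω, S ω)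
              + (R ω * Y ω * h2 (A ω) (V ω, S ω)
                - R ω * μ (A ω) (V ω, S ω) * h2 (A ω) (V ω, S ω))) P := j1.add j12
          rw [integral_add j112 j3, integral_add j1 j12, integral_sub j2a j2b]
      _ = (∫ ω, R ω * σY2 (A ω) (V ω, S ω) * h1 (A ω) (V ω, S ω) ∂P)
          + ∫ ω, u (A ω) * (μ (A ω) (V ω, S ω) - τ (A ω) (V ω)) ^ 2
              * wn n (A ω) (V ω) ^ 2 ∂P := by rw [keyA, keyB]; ring
      _ = (∫ ω, R ω * h3 (A ω) (V ω, S ω) ∂P)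
          + ∫ ω, u (A ω) * (μ (A ω) (V ω, S ω) - τ (A ω) (V ω)) ^ 2
              * wn n (A ω) (V ω) ^ 2 ∂P := by
          congr 1
          refine integral_congr_ae (Eventually.of_forall fun ω => ?_)
          simp only [hh3]
          ring
      _ = (∫ ω, ρ (A ω) (V ω, S ω) * h3 (A ω) (V ω, S ω) ∂P)
          + ∫ ω, u (A ω) * (μ (A ω) (V ω, S ω) - τ (A ω) (V ω)) ^ 2
              * wn n (A ω) (V ω) ^ 2 ∂P := by rw [keyC]
      _ = ∫ ω, (ρ (A ω) (V ω, S ω) * h3 (A ω) (V ω, S ω)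
            + u (A ω) * (μ (A ω) (V ω, S ω) - τ (A ω) (V ω)) ^ 2
              * wn n (A ω) (V ω) ^ 2) ∂P := (integral_add j5 j3).symm
      _ = ∫ ω, u (A ω) * Hn n ω ∂P := by
          refine integral_congr_ae ?_
          filter_upwards [hρh3] with ω hω
          rw [hω]
          simp only [hHn_def]
          have hne := (hρc_pos (A ω) (V ω, S ω)).ne'
          field_simp
  -- assemble a.e. facts
  have hE : ∀ᵐ a ∂(P.map A), ∀ᵐ ω ∂(ν a),
      c ≤ ρ (A ω) (V ω, S ω) ∧ 0 ≤ σY2 (A ω) (V ω, S ω) := by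
    refine hT _ ((measurableSet_le measurable_const hρm).inter
      (measurableSet_le measurable_const hσm)) ?_
    filter_upwards [hρc, hσ_pos] with ω h1 h2 using ⟨h1, h2⟩
  have hmean' : ∀ᵐ a ∂(P.map A), ∀ n : ℕ,
      ∫ ω, B ω * wn n (A ω) (V ω) ∂(ν a) = 0 := ae_all_iff.mpr hmean
  have hsq' : ∀ᵐ a ∂(P.map A), ∀ n : ℕ,
      ∫ ω, (B ω * wn n (A ω) (V ω)) ^ 2 ∂(ν a) = ∫ ω, Hn n ω ∂(ν a) := ae_all_iff.mpr hsq
  filter_upwards [hAa, hE, hmean', hsq'] with a haA haE hamean hasq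
  -- fixed a from now on
  have hcore : ∀ᵐ ω ∂(ν a), A ω = a ∧ ρc a (V ω, S ω) = ρ a (V ω, S ω)
      ∧ c ≤ ρ a (V ω, S ω) ∧ 0 ≤ σY2 a (V ω, S ω) := by
    filter_upwards [haA, haE] with ω h1 h2
    rw [h1] at h2
    exact ⟨h1, max_eq_left h2.1, h2.1, h2.2⟩
  -- fixed-a measurable functions
  have hμa : Measurable fun ω => μ a (V ω, S ω) := hμ_meas.comp (measurable_const.prodMk hXm)
  have hτa : Measurable fun ω => τ a (V ω) := hτ_meas.comp (measurable_const.prodMk hV)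
  have hρa : Measurable fun ω => ρ a (V ω, S ω) := hρ_meas.comp (measurable_const.prodMk hXm)
  have hρca : Measurable fun ω => ρc a (V ω, S ω) := hρcm.comp (measurable_const.prodMk hXm)
  have hσa : Measurable fun ω => σY2 a (V ω, S ω) := hσY2_meas.comp (measurable_const.prodMk hXm)
  have hwa : Measurable fun ω => w a (V ω) := hwm.comp (measurable_const.prodMk hV)
  have hwna : ∀ n, Measurable fun ω => wn n a (V ω) :=
    fun n => (hwnm n).comp (measurable_const.prodMk hV)
  -- fixed-a (clamped) functions
  set Bca : Ω → ℝ := fun ω => R ω * (Y ω - μ a (V ω, S ω)) / ρc a (V ω, S ω)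
      + μ a (V ω, S ω) - τ a (V ω) with hBca_def
  have hBcam : Measurable Bca := (((hR.mul (hY.sub hμa)).div hρca).add hμa).sub hτa
  have hBca_bd : ∀ ω, |Bca ω| ≤ (|CY| + |Cμ|) / c + |Cμ| + |Cτ| := by
    intro ω
    have h4 : |R ω * (Y ω - μ a (V ω, S ω))| ≤ |CY| + |Cμ| := by
      have hy := abs_le.mp ((hCY ω).trans (le_abs_self CY))
      have hm := abs_le.mp ((hCμ a (V ω, S ω)).trans (le_abs_self Cμ))
      rcases hR01 ω with h | h <;> rw [h]
      · simpa using add_nonneg (abs_nonneg CY) (abs_nonneg Cμ)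
      · rw [one_mul, abs_le]; constructor <;> linarith
    have h5 : |R ω * (Y ω - μ a (V ω, S ω)) / ρc a (V ω, S ω)| ≤ (|CY| + |Cμ|) / c :=
      hdiv_bd _ _ _ (hρc_ge _ _) h4
    have h6 := abs_le.mp h5
    have h7 := abs_le.mp ((hCμ a (V ω, S ω)).trans (le_abs_self _))
    have h8 := abs_le.mp ((hCτ a (V ω)).trans (le_abs_self _))
    simp only [hBca_def]
    rw [abs_le]
    constructor <;> linarith
  set ψ : Ω → ℝ := fun ω => Bca ω * w a (V ω) with hψ_def
  have hψm : Measurable ψ := hBcam.mul hwa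
  set ψn : ℕ → Ω → ℝ := fun n ω => Bca ω * wn n a (V ω) with hψn_def
  have hψnm : ∀ n, Measurable (ψn n) := fun n => hBcam.mul (hwna n)
  set K : Ω → ℝ := fun ω => σY2 a (V ω, S ω) / ρc a (V ω, S ω)
      + (μ a (V ω, S ω) - τ a (V ω)) ^ 2 with hK_def
  have hKm : Measurable K := (hσa.div hρca).add ((hμa.sub hτa).pow_const 2)
  set Gc : Ω → ℝ := fun ω => K ω * w a (V ω) ^ 2 with hGc_def
  have hGcm : Measurable Gc := hKm.mul (hwa.pow_const 2)
  set Gcn : ℕ → Ω → ℝ := fun n ω => K ω * wn n a (V ω) ^ 2 with hGcn_def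
  have hGcnm : ∀ n, Measurable (Gcn n) := fun n => hKm.mul ((hwna n).pow_const 2)
  -- transported per-n facts
  have hm0 : ∀ n : ℕ, ∫ ω, ψn n ω ∂(ν a) = 0 := by
    intro n
    rw [← hamean n]
    refine integral_congr_ae ?_
    filter_upwards [hcore] with ω h
    simp only [hψn_def, hBca_def, hB_def, h.1, h.2.1]
  have hs0 : ∀ n : ℕ, ∫ ω, ψn n ω ^ 2 ∂(ν a) = ∫ ω, Gcn n ω ∂(ν a) := by
    intro n
    have e1 : ∫ ω, ψn n ω ^ 2 ∂(ν a) = ∫ ω, (B ω * wn n (A ω) (V ω)) ^ 2 ∂(ν a) := by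
      refine integral_congr_ae ?_
      filter_upwards [hcore] with ω h
      simp only [hψn_def, hBca_def, hB_def, h.1, h.2.1]
    have e2 : ∫ ω, Hn n ω ∂(ν a) = ∫ ω, Gcn n ω ∂(ν a) := by
      refine integral_congr_ae ?_
      filter_upwards [hcore] with ω h
      simp only [hHn_def, hGcn_def, hK_def, h.1, h.2.1]
    rw [e1, hasq n, e2]
  -- nonnegativity
  have hK_nn : ∀ᵐ ω ∂(ν a), 0 ≤ K ω := by
    filter_upwards [hcore] with ω h
    simp only [hK_def]
    exact add_nonneg (div_nonneg h.2.2.2 (hρc_pos _ _).le) (sq_nonneg _)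
  -- limits of truncations
  have hwn_tend : ∀ v : 𝒱, Tendsto (fun n : ℕ => wn n a v) atTop (𝓝 (w a v)) := by
    intro v
    refine tendsto_const_nhds.congr' ?_
    filter_upwards [eventually_ge_atTop ⌈w a v⌉₊] with n hn
    exact (min_eq_left ((Nat.le_ceil _).trans (Nat.cast_le.mpr hn))).symm
  have hwn_mono : ∀ v : 𝒱, Monotone fun n : ℕ => wn n a v := fun v n m hnm =>
    min_le_min le_rfl (Nat.cast_le.mpr hnm)
  -- the two lintegrals
  set I : ℝ≥0∞ := ∫⁻ ω, ENNReal.ofReal (ψ ω ^ 2) ∂(ν a) with hI_def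
  set J : ℝ≥0∞ := ∫⁻ ω, ENNReal.ofReal (Gc ω) ∂(ν a) with hJ_def
  have hTI : Tendsto (fun n : ℕ => ∫⁻ ω, ENNReal.ofReal (ψn n ω ^ 2) ∂(ν a)) atTop (𝓝 I) := by
    refine lintegral_tendsto_of_tendsto_of_monotone
      (fun n => ((hψnm n).pow_const 2).ennreal_ofReal.aemeasurable) ?_ ?_
    · refine Eventually.of_forall fun ω n m hnm => ?_
      refine ENNReal.ofReal_le_ofReal ?_
      simp only [hψn_def, mul_pow]
      refine mul_le_mul_of_nonneg_left ?_ (sq_nonneg _)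
      exact pow_le_pow_left₀ (hwn0 n a (V ω)) (hwn_mono (V ω) hnm) 2
    · refine Eventually.of_forall fun ω => ?_
      exact (ENNReal.continuous_ofReal.tendsto _).comp
        ((tendsto_const_nhds.mul (hwn_tend (V ω))).pow 2)
  have hTJ : Tendsto (fun n : ℕ => ∫⁻ ω, ENNReal.ofReal (Gcn n ω) ∂(ν a)) atTop (𝓝 J) := by
    refine lintegral_tendsto_of_tendsto_of_monotone
      (fun n => (hGcnm n).ennreal_ofReal.aemeasurable) ?_ ?_
    · filter_upwards [hK_nn] with ω hKω
      intro n m hnm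
      refine ENNReal.ofReal_le_ofReal ?_
      simp only [hGcn_def]
      refine mul_le_mul_of_nonneg_left ?_ hKω
      exact pow_le_pow_left₀ (hwn0 n a (V ω)) (hwn_mono (V ω) hnm) 2
    · refine Eventually.of_forall fun ω => ?_
      exact (ENNReal.continuous_ofReal.tendsto _).comp
        (tendsto_const_nhds.mul ((hwn_tend (V ω)).pow 2))
  have hInt_ψn_sq : ∀ n : ℕ, Integrable (fun ω => ψn n ω ^ 2) (ν a) := fun n =>
    integrable_of_bdd (C := (((|CY| + |Cμ|) / c + |Cμ| + |Cτ|) * n) ^ 2)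
      (((hψnm n).pow_const 2).aestronglyMeasurable)
      (fun ω => by
        rw [abs_pow]
        refine pow_le_pow_left₀ (abs_nonneg _) ?_ 2
        simp only [hψn_def]
        exact habs_mul _ _ _ _ (hBca_bd ω) (hwn_bd n a (V ω)))
  have hInt_Gcn : ∀ n : ℕ, Integrable (Gcn n) (ν a) := fun n =>
    integrable_of_bdd (C := (|Cσ| / c + (|Cμ| + |Cτ|) ^ 2) * (n:ℝ) ^ 2)
      ((hGcnm n).aestronglyMeasurable)
      (fun ω => by
        simp only [hGcn_def, hK_def]
        refine habs_mul _ _ _ _ ?_ ?_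
        · refine (abs_add_le _ _).trans (add_le_add
            (hdiv_bd _ _ _ (hρc_ge _ _) ((hCσ _ _).trans (le_abs_self _))) ?_)
          rw [abs_pow]
          exact pow_le_pow_left₀ (abs_nonneg _) (hμτ_bd a (V ω, S ω)) 2
        · rw [abs_pow]
          exact pow_le_pow_left₀ (abs_nonneg _) (hwn_bd n a (V ω)) 2)
  have hEn : ∀ n : ℕ, ∫⁻ ω, ENNReal.ofReal (ψn n ω ^ 2) ∂(ν a)
      = ∫⁻ ω, ENNReal.ofReal (Gcn n ω) ∂(ν a) := by
    intro n
    rw [← ofReal_integral_eq_lintegral_ofReal (hInt_ψn_sq n)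
        (Eventually.of_forall fun ω => sq_nonneg _),
      ← ofReal_integral_eq_lintegral_ofReal (hInt_Gcn n)
        (by filter_upwards [hK_nn] with ω hKω;
            exact mul_nonneg hKω (sq_nonneg _)),
      hs0 n]
  have hIJ : I = J := tendsto_nhds_unique (hTI.congr fun n => hEn n) hTJ
  -- relate the statement's functions to ψ and Gc
  have eqφ : (fun ω => (R ω * (Y ω - μ (A ω) (V ω, S ω)) / ρ (A ω) (V ω, S ω)
        + μ (A ω) (V ω, S ω) - τ (A ω) (V ω)) * w (A ω) (V ω) + θ (A ω))
      =ᵐ[ν a] fun ω => ψ ω + θ a := by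
    filter_upwards [hcore] with ω h
    simp only [hψ_def, hBca_def, h.1, h.2.1]
  have eqG : (fun ω => (σY2 a (V ω, S ω) / ρ a (V ω, S ω)
        + (μ a (V ω, S ω) - τ a (V ω)) ^ 2) * w a (V ω) ^ 2) =ᵐ[ν a] Gc := by
    filter_upwards [hcore] with ω h
    simp only [hGc_def, hK_def, h.2.1]
  have hRHS : ∫ ω, (σY2 a (V ω, S ω) / ρ a (V ω, S ω)
      + (μ a (V ω, S ω) - τ a (V ω)) ^ 2) * w a (V ω) ^ 2 ∂(ν a) = J.toReal := by
    rw [integral_congr_ae eqG]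
    rw [integral_eq_lintegral_of_nonneg_ae
      (by filter_upwards [hK_nn] with ω hKω; exact mul_nonneg hKω (sq_nonneg _))
      hGcm.aestronglyMeasurable]
  rw [variance_ae_congr eqφ, hRHS]
  by_cases hJtop : J = ⊤
  · -- infinite case : both sides are 0
    have hItop : I = ⊤ := hIJ.trans hJtop
    have hnotMem : ¬ MemLp (fun ω => ψ ω + θ a) 2 (ν a) := by
      intro hMem
      have hψMem : MemLp ψ 2 (ν a) := by
        have h1 := hMem.sub (memLp_const (θ a))
        refine h1.ae_eq (Eventually.of_forall fun ω => ?_)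
        simp
      have hsq := hψMem.integrable_sq
      have hle : I ≤ ∫⁻ ω, (‖ψ ω ^ 2‖₊ : ℝ≥0∞) ∂(ν a) := by
        rw [hI_def]
        exact lintegral_mono fun ω => Real.ofReal_le_enorm _
      have hfin : (∫⁻ ω, (‖ψ ω ^ 2‖₊ : ℝ≥0∞) ∂(ν a)) < ⊤ := hsq.2
      rw [hItop] at hle
      exact absurd (lt_of_le_of_lt hle hfin) (lt_irrefl _)
    have hevar : evariance (fun ω => ψ ω + θ a) (ν a) = ⊤ :=
      evariance_eq_top (hψm.aestronglyMeasurable.add aestronglyMeasurable_const) hnotMem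
    rw [hJtop]
    unfold ProbabilityTheory.variance
    rw [hevar]
  · -- finite case
    have hIfin : I ≠ ⊤ := by rw [hIJ]; exact hJtop
    have hψsq_int : Integrable (fun ω => ψ ω ^ 2) (ν a) := by
      refine ⟨(hψm.pow_const 2).aestronglyMeasurable, ?_⟩
      have heq : ∫⁻ ω, (‖ψ ω ^ 2‖₊ : ℝ≥0∞) ∂(ν a) = I := by
        rw [hI_def]
        exact lintegral_congr fun ω => Real.enorm_eq_ofReal (sq_nonneg _)
      show (∫⁻ ω, (‖ψ ω ^ 2‖₊ : ℝ≥0∞) ∂(ν a)) < ⊤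
      rw [heq]
      exact lt_top_iff_ne_top.mpr hIfin
    have hMem : MemLp ψ 2 (ν a) :=
      (memLp_two_iff_integrable_sq hψm.aestronglyMeasurable).mpr hψsq_int
    have hψint : Integrable ψ (ν a) := hMem.integrable one_le_two
    have hmean0 : ∫ ω, ψ ω ∂(ν a) = 0 := by
      have hDCT := tendsto_integral_of_dominated_convergence (F := fun n ω => ψn n ω)
        (f := ψ) (fun ω => |ψ ω|)
        (fun n => (hψnm n).aestronglyMeasurable) hψint.abs
        (fun n => Eventually.of_forall fun ω => by
          rw [Real.norm_eq_abs]
          simp only [hψn_def, hψ_def]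
          rw [abs_mul, abs_mul]
          refine mul_le_mul_of_nonneg_left ?_ (abs_nonneg _)
          rw [abs_of_nonneg (hwn0 n a (V ω)), abs_of_nonneg (hw0 a (V ω))]
          exact hwn_le n a (V ω))
        (Eventually.of_forall fun ω => by
          simp only [hψn_def, hψ_def]
          exact tendsto_const_nhds.mul (hwn_tend (V ω)))
      have hz : (fun n : ℕ => ∫ ω, ψn n ω ∂(ν a)) = fun _ => (0:ℝ) := funext hm0
      rw [hz] at hDCT
      exact (tendsto_nhds_unique hDCT tendsto_const_nhds)
    rw [variance_add_const hψint (θ a), variance_eq_sub hMem]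
    have h1 : (ν a)[ψ ^ 2] = I.toReal := by
      have h2 : (ν a)[ψ ^ 2] = ∫ ω, ψ ω ^ 2 ∂(ν a) := rfl
      rw [h2, integral_eq_lintegral_of_nonneg_ae
        (Eventually.of_forall fun ω => sq_nonneg (ψ ω))
        (hψm.pow_const 2).aestronglyMeasurable]
    have h3 : (ν a)[ψ] = 0 := hmean0
    rw [h1, h3, hIJ]
    simp
end

section
/- Fix a ∈ ℝ and let A₁,…,A_n be i.i.d. real random variables whose law has a density f with respect to Lebesgue measure that is bounded and Lipschitz. Let h_n → 0 with n·h_n → ∞, set g_n(t) = (1, (t−a)/h_n)ᵀ and K_{h_n a}(t) = h_n⁻¹·K((t−a)/h_n), and let D̂_n = n⁻¹·Σ_{i=1}^n g_n(A_i)·K_{h_n a}(A_i)·g_n(A_i)ᵀ be the 2×2 local-linear design matrix. Then D̂_n converges in probability to the diagonal matrix diag(f(a), f(a)·∫u²K(u)du). -/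
open MeasureTheory ProbabilityTheory Filter

open MeasureTheory ProbabilityTheory Filter
open scoped NNReal ENNReal

theorem stmt16_aux {Ω : Type*} [MeasurableSpace Ω] (P : Measure Ω) [IsProbabilityMeasure P]
    (K : ℝ → ℝ) (hK_cont : Continuous K) (hK_nonneg : ∀ u, 0 ≤ K u)
    (hK_prob : ∫ u, K u = 1)
    (hK_supp : ∀ u, 1 < |u| → K u = 0)
    (A : ℕ → Ω → ℝ) (hA : ∀ i, Measurable (A i))
    (hindep : iIndepFun A P)
    (f : ℝ → ℝ) (M L : ℝ) (hf_nonneg : ∀ t, 0 ≤ f t) (hf_bdd : ∀ t, f t ≤ M)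
    (hf_lip : ∀ s t, |f s - f t| ≤ L * |s - t|)
    (hlaw : ∀ i, P.map (A i) = volume.withDensity (fun t => ENNReal.ofReal (f t)))
    (a : ℝ) (h : ℕ → ℝ) (hh_pos : ∀ n, 0 < h n)
    (hh0 : Tendsto h atTop (nhds 0))
    (hnh : Tendsto (fun n : ℕ => (n : ℝ) * h n) atTop atTop)
    (p : ℕ) (ε : ℝ) (hε : 0 < ε) :
    Tendsto (fun n : ℕ => P {ω | ε < |(n : ℝ)⁻¹ * ∑ i ∈ Finset.range n,
       ((A i ω - a) / h n) ^ p * ((h n)⁻¹ * K ((A i ω - a) / h n))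
       - f a * ∫ u, u ^ p * K u|}) atTop (nhds 0) := by
  -- basic facts
  have hf_cont : Continuous f := by
    have hlip : LipschitzWith (Real.toNNReal L) f := by
      apply LipschitzWith.of_dist_le_mul
      intro s t
      rw [Real.dist_eq, Real.dist_eq]
      calc |f s - f t| ≤ L * |s - t| := hf_lip s t
        _ ≤ Real.toNNReal L * |s - t| := by
            gcongr
            exact Real.le_coe_toNNReal L
    exact hlip.continuous
  have hL : 0 ≤ L := by simpa using (abs_nonneg (f 1 - f 0)).trans (hf_lip 1 0)
  have hM : 0 ≤ M := (hf_nonneg 0).trans (hf_bdd 0)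
  obtain ⟨C, hC⟩ := (isCompact_Icc (a := (-1:ℝ)) (b := 1)).exists_bound_of_continuousOn
    hK_cont.continuousOn
  have hC0 : 0 ≤ C := le_trans (norm_nonneg _) (hC 0 (by norm_num))
  have hKC : ∀ u, K u ≤ C := by
    intro u
    by_cases hu : |u| ≤ 1
    · have := hC u (by rw [Set.mem_Icc]; constructor <;> [linarith [(abs_le.1 hu).1];
        exact (abs_le.1 hu).2])
      calc K u ≤ |K u| := le_abs_self _
        _ = ‖K u‖ := (Real.norm_eq_abs _).symm
        _ ≤ C := this
    · rw [hK_supp u (not_le.1 hu)]; exact hC0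
  have hKcs : HasCompactSupport K :=
    HasCompactSupport.intro (isCompact_Icc (a := (-1:ℝ)) (b := 1)) (fun u hu => hK_supp u (by
      simp only [Set.mem_Icc, not_and_or, not_le] at hu
      rcases hu with h1 | h1
      · exact lt_abs.2 (Or.inr (by linarith))
      · exact lt_abs.2 (Or.inl h1)))
  have hK_int : Integrable K := hK_cont.integrable_of_hasCompactSupport hKcs
  have hprod_int : ∀ (F : ℝ → ℝ), Continuous F →
      Integrable (fun u => u ^ p * K u * F u) := by
    intro F hF
    exact Continuous.integrable_of_hasCompactSupport
      (((continuous_pow p).mul hK_cont).mul hF)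
      ((hKcs.mul_left).mul_right)
  -- the summand function
  set φ : ℕ → ℝ → ℝ := fun n t => ((t - a) / h n) ^ p * ((h n)⁻¹ * K ((t - a) / h n))
    with hφdef
  have hφcont : ∀ n, Continuous (φ n) := by
    intro n
    apply Continuous.mul
    · exact ((continuous_id.sub continuous_const).div_const (h n)).pow p
    · exact continuous_const.mul
        (hK_cont.comp ((continuous_id.sub continuous_const).div_const (h n)))
  have hφbd : ∀ n t, |φ n t| ≤ C / h n := by
    intro n t
    set u := (t - a) / h n with hu_def
    by_cases hu : |u| ≤ 1
    · rw [hφdef]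
      simp only [← hu_def]
      rw [abs_mul, abs_mul]
      have h1 : |u ^ p| ≤ 1 := by rw [abs_pow]; exact pow_le_one₀ (abs_nonneg _) hu
      have h2 : |(h n)⁻¹| = (h n)⁻¹ := abs_of_pos (inv_pos.2 (hh_pos n))
      have h3 : |K u| ≤ C := by rw [abs_of_nonneg (hK_nonneg u)]; exact hKC u
      calc |u ^ p| * (|(h n)⁻¹| * |K u|) ≤ 1 * ((h n)⁻¹ * C) := by
            rw [h2]
            exact mul_le_mul h1 (mul_le_mul_of_nonneg_left h3 (inv_nonneg.2 (hh_pos n).le))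
              (mul_nonneg (inv_nonneg.2 (hh_pos n).le) (abs_nonneg _)) zero_le_one
        _ = C / h n := by rw [one_mul, mul_comm, div_eq_mul_inv]
    · rw [hφdef]
      simp only [← hu_def]
      rw [hK_supp u (not_le.1 hu)]
      simp only [mul_zero, zero_mul, abs_zero]
      exact div_nonneg hC0 (hh_pos n).le
  have hφzero : ∀ n t, t ∉ Set.Icc (a - h n) (a + h n) → φ n t = 0 := by
    intro n t ht
    have h1 : 1 < |(t - a) / h n| := by
      rw [abs_div, abs_of_pos (hh_pos n), lt_div_iff₀ (hh_pos n), one_mul]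
      simp only [Set.mem_Icc, not_and_or, not_le] at ht
      rcases ht with h1 | h1
      · exact lt_abs.2 (Or.inr (by linarith))
      · exact lt_abs.2 (Or.inl (by linarith))
    rw [hφdef]
    simp only []
    rw [hK_supp _ h1]
    ring
  -- expectation transfer via the law
  have hlaw_int : ∀ (F : ℝ → ℝ), Continuous F → ∀ i,
      ∫ ω, F (A i ω) ∂P = ∫ t, F t * f t := by
    intro F hF i
    rw [← integral_map (hA i).aemeasurable hF.aestronglyMeasurable, hlaw i]
    rw [show (fun t => ENNReal.ofReal (f t)) = (fun t => ((Real.toNNReal (f t) : ℝ≥0) : ℝ≥0∞))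
      from rfl]
    rw [integral_withDensity_eq_integral_smul (hf_cont.measurable.real_toNNReal) F]
    congr 1
    ext t
    rw [NNReal.smul_def, Real.coe_toNNReal _ (hf_nonneg t), smul_eq_mul, mul_comm]
  -- the mean after change of variables
  have hm : ∀ n, ∫ t, φ n t * f t = ∫ u, u ^ p * K u * f (a + h n * u) := by
    intro n
    have hne : h n ≠ 0 := (hh_pos n).ne'
    have key : (fun t => φ n t * f t) = (fun t => (h n)⁻¹ *
        ((fun s => (s / h n) ^ p * K (s / h n) * f (a + h n * (s / h n))) (t - a))) := by
      funext t
      have harg : a + h n * ((t - a) / h n) = t := by field_simp; ring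
      simp only [hφdef, harg]
      ring
    rw [key, integral_const_mul, MeasureTheory.integral_sub_right_eq_self
      (fun s => (s / h n) ^ p * K (s / h n) * f (a + h n * (s / h n))) a]
    rw [show (fun s => (s / h n) ^ p * K (s / h n) * f (a + h n * (s / h n)))
      = (fun s => (fun u => u ^ p * K u * f (a + h n * u)) (s / h n)) from rfl]
    rw [MeasureTheory.Measure.integral_comp_div (fun u => u ^ p * K u * f (a + h n * u)) (h n)]
    rw [abs_of_pos (hh_pos n), smul_eq_mul, ← mul_assoc, inv_mul_cancel₀ hne, one_mul]
  -- the mean is close to the target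
  set c : ℝ := f a * ∫ u, u ^ p * K u with hc_def
  set m : ℕ → ℝ := fun n => ∫ u, u ^ p * K u * f (a + h n * u) with hm_def
  have hmc : ∀ n, |m n - c| ≤ L * h n := by
    intro n
    have hint1 : Integrable (fun u => u ^ p * K u * f (a + h n * u)) :=
      hprod_int _ (hf_cont.comp (continuous_const.add (continuous_const.mul continuous_id)))
    have hint2 : Integrable (fun u => u ^ p * K u * f a) :=
      hprod_int _ continuous_const
    have hsub : m n - c = ∫ u, (u ^ p * K u * f (a + h n * u) - u ^ p * K u * f a) := by
      rw [integral_sub hint1 hint2, hm_def, hc_def]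
      congr 1
      rw [mul_comm]
      exact (integral_mul_const (f a) fun u => u ^ p * K u).symm
    have hbd : ∀ u : ℝ, ‖u ^ p * K u * f (a + h n * u) - u ^ p * K u * f a‖
        ≤ L * h n * K u := by
      intro u
      by_cases hu : |u| ≤ 1
      · have h1 : ‖u ^ p * K u * f (a + h n * u) - u ^ p * K u * f a‖
            = |u ^ p| * K u * |f (a + h n * u) - f a| := by
          rw [Real.norm_eq_abs, show u ^ p * K u * f (a + h n * u) - u ^ p * K u * f a
            = u ^ p * K u * (f (a + h n * u) - f a) by ring, abs_mul, abs_mul,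
            abs_of_nonneg (hK_nonneg u)]
        rw [h1]
        have h2 : |u ^ p| ≤ 1 := by rw [abs_pow]; exact pow_le_one₀ (abs_nonneg _) hu
        have h3 : |f (a + h n * u) - f a| ≤ L * h n := by
          calc |f (a + h n * u) - f a| ≤ L * |a + h n * u - a| := hf_lip _ _
            _ = L * (h n * |u|) := by
                rw [show a + h n * u - a = h n * u by ring, abs_mul,
                  abs_of_pos (hh_pos n)]
            _ ≤ L * (h n * 1) := by
                have h4 := (hh_pos n).le
                gcongr
            _ = L * h n := by ring
        calc |u ^ p| * K u * |f (a + h n * u) - f a| ≤ 1 * K u * (L * h n) := by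
              exact mul_le_mul (mul_le_mul h2 le_rfl (hK_nonneg u) zero_le_one) h3
                (abs_nonneg _) (by simpa using hK_nonneg u)
          _ = L * h n * K u := by ring
      · rw [hK_supp u (not_le.1 hu)]
        simp [abs_nonneg]
    rw [hsub, ← Real.norm_eq_abs]
    calc ‖∫ u, (u ^ p * K u * f (a + h n * u) - u ^ p * K u * f a)‖
        ≤ ∫ u, L * h n * K u := norm_integral_le_of_norm_le
          ((hK_int.const_mul (L * h n))) (Filter.Eventually.of_forall hbd)
      _ = L * h n := by rw [integral_const_mul, hK_prob, mul_one]
  -- the random variables X n i = φ n (A i ·)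
  set X : ℕ → ℕ → Ω → ℝ := fun n i ω => φ n (A i ω) with hX_def
  have hXmeas : ∀ n i, Measurable (X n i) := fun n i => (hφcont n).measurable.comp (hA i)
  have hXmem : ∀ n i, MemLp (X n i) 2 P := by
    intro n i
    exact MemLp.of_bound (hXmeas n i).aestronglyMeasurable (C / h n)
      (Filter.Eventually.of_forall fun ω => by
        rw [Real.norm_eq_abs]; exact hφbd n (A i ω))
  have hXint : ∀ n i, Integrable (X n i) P := fun n i => (hXmem n i).integrable one_le_two
  have hXmean : ∀ n i, ∫ ω, X n i ω ∂P = m n := by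
    intro n i
    rw [hX_def]
    simp only []
    rw [hlaw_int (φ n) (hφcont n) i]
    exact hm n
  -- second moment bound
  have hX2 : ∀ n i, ∫ ω, (X n i ω) ^ 2 ∂P ≤ 2 * C ^ 2 * M / h n := by
    intro n i
    have e1 : ∫ ω, (X n i ω) ^ 2 ∂P = ∫ t, (φ n t) ^ 2 * f t := by
      exact hlaw_int (fun t => (φ n t) ^ 2) ((hφcont n).pow 2) i
    rw [e1]
    have hind : ∀ t : ℝ, (φ n t) ^ 2 * f t ≤
        Set.indicator (Set.Icc (a - h n) (a + h n)) (fun _ => (C / h n) ^ 2 * M) t := by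
      intro t
      by_cases ht : t ∈ Set.Icc (a - h n) (a + h n)
      · rw [Set.indicator_of_mem ht]
        have h1 : (φ n t) ^ 2 ≤ (C / h n) ^ 2 := by
          rw [← sq_abs]
          have := hφbd n t
          have h0 : (0:ℝ) ≤ |φ n t| := abs_nonneg _
          nlinarith
        exact mul_le_mul h1 (hf_bdd t) (hf_nonneg t) (by positivity)
      · rw [Set.indicator_of_notMem ht, hφzero n t ht]
        simp
    have hint_ind : Integrable (Set.indicator (Set.Icc (a - h n) (a + h n))
        (fun _ => (C / h n) ^ 2 * M)) := by
      rw [integrable_indicator_iff measurableSet_Icc]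
      exact integrableOn_const measure_Icc_lt_top.ne
    have hint_φ2 : Integrable (fun t => (φ n t) ^ 2 * f t) := by
      apply Continuous.integrable_of_hasCompactSupport (((hφcont n).pow 2).mul hf_cont)
      apply HasCompactSupport.intro (isCompact_Icc (a := a - h n) (b := a + h n))
      intro t ht
      rw [Pi.mul_apply, Pi.pow_apply, hφzero n t ht]
      ring
    calc ∫ t, (φ n t) ^ 2 * f t
        ≤ ∫ t, Set.indicator (Set.Icc (a - h n) (a + h n)) (fun _ => (C / h n) ^ 2 * M) t :=
          integral_mono hint_φ2 hint_ind hind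
      _ = (volume (Set.Icc (a - h n) (a + h n))).toReal • ((C / h n) ^ 2 * M) :=
          integral_indicator_const _ measurableSet_Icc
      _ = 2 * C ^ 2 * M / h n := by
          rw [Real.volume_Icc, show a + h n - (a - h n) = 2 * h n by ring,
            ENNReal.toReal_ofReal (mul_nonneg zero_le_two (hh_pos n).le), smul_eq_mul]
          have hne : h n ≠ 0 := (hh_pos n).ne'
          field_simp
  -- variance bound
  have hvar : ∀ n i, variance (X n i) P ≤ 2 * C ^ 2 * M / h n := by
    intro n i
    refine (variance_le_expectation_sq (hXmeas n i).aestronglyMeasurable).trans ?_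
    exact hX2 n i
  -- the sum
  set S : ℕ → Ω → ℝ := fun n => ∑ i ∈ Finset.range n, X n i with hS_def
  have hSmem : ∀ n, MemLp (S n) 2 P := fun n => memLp_finset_sum' _ (fun i _ => hXmem n i)
  have hSapp : ∀ n ω, S n ω = ∑ i ∈ Finset.range n, X n i ω := by
    intro n ω
    rw [hS_def]
    simp [Finset.sum_apply]
  have hSmean : ∀ n, ∫ ω, S n ω ∂P = n * m n := by
    intro n
    simp_rw [hSapp]
    rw [integral_finset_sum _ (fun i _ => hXint n i)]
    simp [hXmean]
  have hSvar : ∀ n, variance (S n) P ≤ n * (2 * C ^ 2 * M / h n) := by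
    intro n
    rw [hS_def]
    rw [IndepFun.variance_sum (fun i _ => hXmem n i)
      (fun i _ j _ hij => (hindep.indepFun hij).comp (hφcont n).measurable
        (hφcont n).measurable)]
    calc ∑ i ∈ Finset.range n, variance (X n i) P
        ≤ ∑ _i ∈ Finset.range n, (2 * C ^ 2 * M / h n) :=
          Finset.sum_le_sum fun i _ => hvar n i
      _ = n * (2 * C ^ 2 * M / h n) := by
          rw [Finset.sum_const, Finset.card_range, nsmul_eq_mul]
  -- eventual bound on the deviation probability
  have hLh : Tendsto (fun n => L * h n) atTop (nhds 0) := by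
    simpa using hh0.const_mul L
  have hev1 : ∀ᶠ n : ℕ in atTop, L * h n ≤ ε / 2 := by
    exact hLh.eventually (eventually_le_nhds (by positivity))
  have hev2 : ∀ᶠ n : ℕ in atTop, 1 ≤ n := eventually_ge_atTop 1
  set b : ℕ → ℝ := fun n => (2 * C ^ 2 * M) / ((n * h n) * (ε / 2) ^ 2) with hb_def
  have hb0 : Tendsto b atTop (nhds 0) := by
    apply Tendsto.div_atTop (tendsto_const_nhds)
    exact hnh.atTop_mul_const (by positivity : (0:ℝ) < (ε / 2) ^ 2)
  have hkey : ∀ᶠ n : ℕ in atTop,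
      P {ω | ε < |(n : ℝ)⁻¹ * ∑ i ∈ Finset.range n, φ n (A i ω) - c|}
        ≤ ENNReal.ofReal (b n) := by
    filter_upwards [hev1, hev2] with n h1 h2
    have hn0 : (0:ℝ) < n := by exact_mod_cast h2
    have hmn : |m n - c| ≤ ε / 2 := (hmc n).trans h1
    have hsubset : {ω | ε < |(n : ℝ)⁻¹ * ∑ i ∈ Finset.range n, φ n (A i ω) - c|}
        ⊆ {ω | (n : ℝ) * (ε / 2) ≤ |S n ω - ∫ ω', S n ω' ∂P|} := by
      intro ω hω
      simp only [Set.mem_setOf_eq] at hω ⊢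
      rw [hSmean n, hSapp n ω]
      set x : ℝ := (n : ℝ)⁻¹ * ∑ i ∈ Finset.range n, φ n (A i ω) with hx_def
      have hxm : ε / 2 ≤ |x - m n| := by
        have htri : |x - c| ≤ |x - m n| + |m n - c| := abs_sub_le x (m n) c
        linarith
      have hSx : (∑ i ∈ Finset.range n, X n i ω) - (n : ℝ) * m n = (n : ℝ) * (x - m n) := by
        rw [hx_def, hX_def]
        field_simp
      rw [hSx, abs_mul, abs_of_pos hn0]
      exact mul_le_mul_of_nonneg_left hxm hn0.le
    calc P {ω | ε < |(n : ℝ)⁻¹ * ∑ i ∈ Finset.range n, φ n (A i ω) - c|}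
        ≤ P {ω | (n : ℝ) * (ε / 2) ≤ |S n ω - ∫ ω', S n ω' ∂P|} := measure_mono hsubset
      _ ≤ ENNReal.ofReal (variance (S n) P / ((n : ℝ) * (ε / 2)) ^ 2) :=
          meas_ge_le_variance_div_sq (hSmem n) (by positivity)
      _ ≤ ENNReal.ofReal (b n) := by
          apply ENNReal.ofReal_le_ofReal
          rw [hb_def]
          have hvS := hSvar n
          have hne : h n ≠ 0 := (hh_pos n).ne'
          calc variance (S n) P / ((n : ℝ) * (ε / 2)) ^ 2
              ≤ ((n : ℝ) * (2 * C ^ 2 * M / h n)) / ((n : ℝ) * (ε / 2)) ^ 2 := by gcongr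
            _ = (2 * C ^ 2 * M) / ((n * h n) * (ε / 2) ^ 2) := by
                field_simp
  have hb0' : Tendsto (fun n => ENNReal.ofReal (b n)) atTop (nhds 0) := by
    rw [show (0 : ℝ≥0∞) = ENNReal.ofReal 0 from (ENNReal.ofReal_zero).symm]
    exact (ENNReal.continuous_ofReal.tendsto 0).comp hb0
  exact tendsto_of_tendsto_of_tendsto_of_le_of_le' tendsto_const_nhds hb0'
    (Filter.Eventually.of_forall fun n => zero_le) hkey

/-- Let `A₀, A₁, …` be i.i.d. real random variables whose common law has a
density `f` (w.r.t. Lebesgue measure) that is bounded and Lipschitz, let `h_n → 0` with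
`n·h_n → ∞`, and let `D̂ₙ = n⁻¹ Σ_{i<n} gₙ(Aᵢ)·K_{hₙa}(Aᵢ)·gₙ(Aᵢ)ᵀ` be the 2×2 local-linear
design matrix at `a`, where `gₙ(t) = (1, (t−a)/hₙ)ᵀ` and `K` is a continuous symmetric
probability density supported in `[-1,1]`. Then `D̂ₙ` converges in probability (entrywise) to
`diag(f(a), f(a)·∫u²K(u)du)`. -/
theorem stmt_16 {Ω : Type*} [MeasurableSpace Ω] (P : Measure Ω) [IsProbabilityMeasure P]
    (K : ℝ → ℝ) (hK_cont : Continuous K) (hK_nonneg : ∀ u, 0 ≤ K u)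
    (hK_prob : ∫ u, K u = 1) (hK_symm : ∀ u, K (-u) = K u)
    (hK_supp : ∀ u, 1 < |u| → K u = 0)
    (A : ℕ → Ω → ℝ) (hA : ∀ i, Measurable (A i))
    (hindep : iIndepFun A P)
    (f : ℝ → ℝ) (M L : ℝ) (hf_nonneg : ∀ t, 0 ≤ f t) (hf_bdd : ∀ t, f t ≤ M)
    (hf_lip : ∀ s t, |f s - f t| ≤ L * |s - t|)
    (hlaw : ∀ i, P.map (A i) = volume.withDensity (fun t => ENNReal.ofReal (f t)))
    (a : ℝ) (h : ℕ → ℝ) (hh_pos : ∀ n, 0 < h n)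
    (hh0 : Tendsto h atTop (nhds 0))
    (hnh : Tendsto (fun n : ℕ => (n : ℝ) * h n) atTop atTop)
    (g : ℕ → ℝ → Fin 2 → ℝ) (hg : ∀ n t, g n t = ![1, (t - a) / h n])
    (D : ℕ → Ω → Matrix (Fin 2) (Fin 2) ℝ)
    (hD : ∀ n ω, D n ω = fun j k => (n : ℝ)⁻¹ * ∑ i ∈ Finset.range n,
      g n (A i ω) j * ((h n)⁻¹ * K ((A i ω - a) / h n)) * g n (A i ω) k) :
    ∀ (j k : Fin 2), ∀ ε > (0 : ℝ),
      Tendsto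
        (fun n => P {ω | ε <
          |D n ω j k - Matrix.diagonal ![f a, f a * ∫ u, u ^ 2 * K u] j k|})
        atTop (nhds 0) := by

  intro j k ε hε
  have hodd : ∫ u : ℝ, u ^ 1 * K u = 0 := by
    simp only [pow_one]
    have h1 := MeasureTheory.integral_neg_eq_self (fun u => u * K u) volume
    have h2 : ∀ u : ℝ, (-u) * K (-u) = -(u * K u) := by intro u; rw [hK_symm]; ring
    simp_rw [h2, integral_neg] at h1
    linarith
  have h00 : ∫ u : ℝ, u ^ 0 * K u = 1 := by simpa using hK_prob
  have haux := fun p => stmt16_aux P K hK_cont hK_nonneg hK_prob hK_supp A hA hindep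
    f M L hf_nonneg hf_bdd hf_lip hlaw a h hh_pos hh0 hnh p ε hε
  have ebody : ∀ (p : ℕ) (j k : Fin 2), (j : ℕ) + (k : ℕ) = p → ∀ (n : ℕ) ω,
      D n ω j k = (n:ℝ)⁻¹ * ∑ i ∈ Finset.range n,
        ((A i ω - a) / h n) ^ p * ((h n)⁻¹ * K ((A i ω - a) / h n)) := by
    intro p j k hp n ω
    simp only [hD, hg]
    congr 1
    refine Finset.sum_congr rfl fun i _ => ?_
    fin_cases j <;> fin_cases k <;> subst hp <;>
      simp [Matrix.cons_val_zero, Matrix.cons_val_one, Matrix.head_cons] <;> ring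
  have ediag : Matrix.diagonal ![f a, f a * ∫ u, u ^ 2 * K u] j k
      = f a * ∫ u : ℝ, u ^ ((j : ℕ) + (k : ℕ)) * K u := by
    have hodd' : ∫ u : ℝ, u * K u = 0 := by simpa using hodd
    fin_cases j <;> fin_cases k
    · simp [Matrix.diagonal, hK_prob]
    · simp only [Matrix.diagonal]
      simp [hodd']
    · simp only [Matrix.diagonal]
      simp [hodd']
    · simp [Matrix.diagonal]
  simp only [ebody ((j : ℕ) + (k : ℕ)) j k rfl, ediag]
  exact haux ((j : ℕ) + (k : ℕ))
end
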